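/- arXiv:2509.23898 — 13 statements merged into one kernel-verified Lean document; each statement's English description precedes it below -/
import Mathlib

section
/- Let D ≥ 2 be an integer, p ≥ 1, λ > 0, and let ω ∈ ℝ^p, γ_1, …, γ_{D−1} ∈ ℝ and g ∈ ℝ^p. Suppose the first-order stationarity conditions (∏_{d=1}^{D−1} γ_d)·g + (2λ/D)·ω = 0 and, for every d ∈ {1,…,D−1}, (∏_{d'≠d} γ_{d'})·⟨ω, g⟩ + (2λ/D)·γ_d = 0 hold. Then the gating parameters are balanced: ‖ω‖₂² = γ_d² for every d ∈ {1,…,D−1}, and consequently ‖ω‖₂² = ‖(∏_{d=1}^{D−1} γ_d)·ω‖₂^{2/D}. -/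
open RealInnerProductSpace

/-- balancedness at stationary points of the `L₂`-regularized
`D`-gated objective. -/
theorem stmt_0 (D p : ℕ) (hD : 2 ≤ D) (hp : 1 ≤ p) (lam : ℝ) (hlam : 0 < lam)
    (ω g : EuclideanSpace ℝ (Fin p)) (γ : Fin (D - 1) → ℝ)
    (h1 : (∏ d, γ d) • g + (2 * lam / (D : ℝ)) • ω = 0)
    (h2 : ∀ d : Fin (D - 1),
      (∏ d' ∈ Finset.univ.erase d, γ d') * ⟪ω, g⟫ + (2 * lam / (D : ℝ)) * γ d = 0) :
    (∀ d : Fin (D - 1), ‖ω‖ ^ 2 = γ d ^ 2) ∧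
      ‖ω‖ ^ 2 = ‖(∏ d, γ d) • ω‖ ^ ((2 : ℝ) / (D : ℝ)) := by
  have hDpos : (0 : ℝ) < (D : ℝ) := by positivity
  have hc : (0 : ℝ) < 2 * lam / (D : ℝ) := by positivity
  set c : ℝ := 2 * lam / (D : ℝ) with hcdef
  have hA : (∏ d, γ d) * ⟪ω, g⟫ + c * ‖ω‖ ^ 2 = 0 := by
    have := congrArg (fun v => ⟪ω, v⟫) h1
    simp only [inner_add_right, real_inner_smul_right, real_inner_self_eq_norm_sq,
      inner_zero_right] at this
    exact this
  have hbal : ∀ d : Fin (D - 1), ‖ω‖ ^ 2 = γ d ^ 2 := by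
    intro d
    have h2d := h2 d
    have hmul := congrArg (fun x => x * γ d) h2d
    have herase : (∏ d' ∈ Finset.univ.erase d, γ d') * γ d = ∏ d', γ d' :=
      Finset.prod_erase_mul _ _ (Finset.mem_univ d)
    have hB : (∏ d', γ d') * ⟪ω, g⟫ + c * γ d ^ 2 = 0 := by
      have h0 : ((∏ d' ∈ Finset.univ.erase d, γ d') * ⟪ω, g⟫ + c * γ d) * γ d = 0 := by
        simpa using hmul
      calc (∏ d', γ d') * ⟪ω, g⟫ + c * γ d ^ 2
          = ((∏ d' ∈ Finset.univ.erase d, γ d') * ⟪ω, g⟫ + c * γ d) * γ d := by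
            rw [← herase]; ring
        _ = 0 := h0
    have : c * ‖ω‖ ^ 2 = c * γ d ^ 2 := by linarith
    exact mul_left_cancel₀ (ne_of_gt hc) this
  refine ⟨hbal, ?_⟩
  have habs : ∀ d : Fin (D - 1), |γ d| = ‖ω‖ := by
    intro d
    have h := (hbal d).symm
    have h' : Real.sqrt (γ d ^ 2) = Real.sqrt (‖ω‖ ^ 2) := by rw [h]
    rwa [Real.sqrt_sq_eq_abs, Real.sqrt_sq (norm_nonneg ω)] at h'
  have hnorm : ‖(∏ d, γ d) • ω‖ = ‖ω‖ ^ D := by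
    rw [norm_smul]
    have : ‖(∏ d, γ d)‖ = ‖ω‖ ^ (D - 1) := by
      rw [Real.norm_eq_abs, Finset.abs_prod]
      simp [habs, Finset.card_univ]
    rw [this]
    have hD1 : D - 1 + 1 = D := by omega
    rw [← pow_succ, hD1]
  rw [hnorm]
  have hDne : (D : ℝ) ≠ 0 := ne_of_gt hDpos
  rw [← Real.rpow_natCast ‖ω‖ D, ← Real.rpow_mul (norm_nonneg ω)]
  rw [mul_div_cancel₀ 2 hDne]
  rw [show (2:ℝ) = ((2:ℕ):ℝ) by norm_num, Real.rpow_natCast]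
end

section
/- Let D ≥ 2 be an integer, p ≥ 1, ω ∈ ℝ^p and γ_1, …, γ_{D−1} ∈ ℝ. Then (1/D)·(‖ω‖₂² + Σ_{d=1}^{D−1} γ_d²) ≥ ‖(∏_{d=1}^{D−1} γ_d)·ω‖₂^{2/D}. -/
/-- the smooth surrogate `L₂` penalty of the gating parameters dominates
the non-smooth penalty `‖w‖₂^{2/D}` of the effective weight. -/
theorem stmt_1 (D p : ℕ) (hD : 2 ≤ D) (hp : 1 ≤ p)
    (ω : EuclideanSpace ℝ (Fin p)) (γ : Fin (D - 1) → ℝ) :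
    ‖(∏ d, γ d) • ω‖ ^ ((2 : ℝ) / (D : ℝ)) ≤
      (1 / (D : ℝ)) * (‖ω‖ ^ 2 + ∑ d, γ d ^ 2) := by
  obtain ⟨n, rfl⟩ : ∃ n, D = n + 1 := ⟨D - 1, by omega⟩
  have hDpos : (0 : ℝ) < (n + 1 : ℕ) := by positivity
  set z : Fin (n + 1) → ℝ := Fin.cons (‖ω‖ ^ 2) (fun d => γ d ^ 2) with hz
  have key := Real.geom_mean_le_arith_mean_weighted Finset.univ
    (fun _ => 1 / ((n + 1 : ℕ) : ℝ)) z
    (fun i _ => by positivity)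
    (by simp; field_simp)
    (fun i _ => by
      refine Fin.cases ?_ ?_ i <;> intros <;> simp [hz] <;> positivity)
  have hsum : ∑ i, (1 / ((n + 1 : ℕ) : ℝ)) * z i
      = (1 / ((n + 1 : ℕ) : ℝ)) * (‖ω‖ ^ 2 + ∑ d, γ d ^ 2) := by
    rw [← Finset.mul_sum]
    congr 1
    simpa [hz] using Fin.sum_cons (‖ω‖ ^ 2) (fun d => γ d ^ 2)
  have hprod : ∏ i, z i ^ (1 / ((n + 1 : ℕ) : ℝ))
      = ‖(∏ d, γ d) • ω‖ ^ ((2 : ℝ) / ((n + 1 : ℕ) : ℝ)) := by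
    have hznn : ∀ i, 0 ≤ z i := fun i => by
      refine Fin.cases ?_ ?_ i <;> intros <;> simp [hz] <;> positivity
    rw [Real.finset_prod_rpow _ _ (fun i _ => hznn i)]
    have hpz : ∏ i, z i = ‖(∏ d, γ d) • ω‖ ^ 2 := by
      show ∏ i : Fin (n + 1 - 1).succ, Fin.cons (‖ω‖ ^ 2) (fun d => γ d ^ 2) i = _
      rw [Fin.prod_cons, norm_smul, mul_pow, Finset.prod_pow, Real.norm_eq_abs, sq_abs]
      ring
    rw [hpz, ← Real.rpow_natCast (‖(∏ d, γ d) • ω‖) 2, ← Real.rpow_mul (norm_nonneg _)]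
    norm_num [div_eq_mul_inv]
  rw [hprod, hsum] at key
  exact key
end

section
/- Let D ≥ 2 and let w = (w_1, …, w_J) ∈ ℝ^p be partitioned into J groups with w_j ∈ ℝ^{p_j}. Let ω_j ∈ ℝ^{p_j} and γ_{j,d} ∈ ℝ (j ∈ {1,…,J}, d ∈ {1,…,D−1}) be D-gating parameters satisfying w_j = (∏_{d=1}^{D−1} γ_{j,d})·ω_j for every j and that are balanced, i.e., ‖ω_j‖₂² = γ_{j,d}² for all j and d. Then (1/D)·(Σ_{j=1}^{J} ‖ω_j‖₂² + Σ_{j=1}^{J} Σ_{d=1}^{D−1} γ_{j,d}²) = Σ_{j=1}^{J} ‖w_j‖₂^{2/D}; in particular, for any function L₀ : ℝ^p → ℝ and any λ ≥ 0, L₀(w) + (λ/D)(‖ω‖₂² + ‖Γ‖_F²) = L₀(w) + λ‖w‖_{2,2/D}^{2/D}, where ‖ω‖₂² = Σ_j ‖ω_j‖₂², ‖Γ‖_F² = Σ_{j,d} γ_{j,d}², and ‖w‖_{2,2/D}^{2/D} = Σ_j ‖w_j‖₂^{2/D}. -/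
/-!
Balancedness gives `|γ_{j,d}| = ‖ω_j‖`, hence `‖w_j‖ = ‖ω_j‖ ^ D` and the surrogate penalty
of group `j` is `D ‖ω_j‖² = D ‖w_j‖ ^ (2/D)`; summing over the groups gives the identity.
-/

open Finset

theorem abs_prod_eq_pow_of_sq_eq {ι : Type*} [Fintype ι] (γ : ι → ℝ) {r : ℝ} (hr : 0 ≤ r)
    (hγ : ∀ d, r ^ 2 = γ d ^ 2) : |∏ d, γ d| = r ^ Fintype.card ι := by
  have habs : ∀ d, |γ d| = r := fun d => by
    rw [← Real.sqrt_sq_eq_abs, ← hγ d, Real.sqrt_sq hr]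
  simp [abs_prod, habs]

theorem pow_rpow_two_div_natCast {r : ℝ} (hr : 0 ≤ r) {n : ℕ} (hn : n ≠ 0) :
    (r ^ n) ^ ((2 : ℝ) / n) = r ^ 2 := by
  rw [← Real.rpow_natCast r n, ← Real.rpow_mul hr, mul_div_cancel₀ _ (by exact_mod_cast hn)]
  norm_num

theorem norm_prod_smul_of_balanced {E : Type*} [SeminormedAddCommGroup E] [NormedSpace ℝ E]
    {ι : Type*} [Fintype ι] (x : E) (γ : ι → ℝ) (hbal : ∀ d, ‖x‖ ^ 2 = γ d ^ 2) :
    ‖(∏ d, γ d) • x‖ = ‖x‖ ^ (Fintype.card ι + 1) := by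
  rw [norm_smul, Real.norm_eq_abs, abs_prod_eq_pow_of_sq_eq γ (norm_nonneg x) hbal, pow_succ]

theorem sq_norm_add_sum_sq_eq_of_balanced {E : Type*} [SeminormedAddCommGroup E]
    [NormedSpace ℝ E] {ι : Type*} [Fintype ι] (x : E) (γ : ι → ℝ)
    (hbal : ∀ d, ‖x‖ ^ 2 = γ d ^ 2) :
    ‖x‖ ^ 2 + ∑ d, γ d ^ 2 =
      ((Fintype.card ι + 1 : ℕ) : ℝ) *
        ‖(∏ d, γ d) • x‖ ^ ((2 : ℝ) / ((Fintype.card ι + 1 : ℕ) : ℝ)) := by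
  rw [norm_prod_smul_of_balanced x γ hbal,
    pow_rpow_two_div_natCast (norm_nonneg x) (Nat.succ_ne_zero _),
    ← Finset.sum_congr rfl fun d _ => hbal d]
  simp only [sum_const, card_univ, nsmul_eq_mul]
  push_cast
  ring

/-- at balanced `D`-gating parameters, the smooth surrogate penalty equals the
structured `L_{2,2/D}` penalty, and hence the `D`-gated objective equals the
`L_{2,2/D}`-regularized objective. -/
theorem stmt_3 (D J : ℕ) (hD : 2 ≤ D) (p : Fin J → ℕ)
    (ω : (j : Fin J) → EuclideanSpace ℝ (Fin (p j)))
    (γ : Fin J → Fin (D - 1) → ℝ)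
    (w : (j : Fin J) → EuclideanSpace ℝ (Fin (p j)))
    (hw : ∀ j, w j = (∏ d, γ j d) • ω j)
    (hbal : ∀ j d, ‖ω j‖ ^ 2 = γ j d ^ 2) :
    (1 / (D : ℝ)) * ((∑ j, ‖ω j‖ ^ 2) + ∑ j, ∑ d, γ j d ^ 2) =
        ∑ j, ‖w j‖ ^ ((2 : ℝ) / (D : ℝ)) ∧
      ∀ (L₀ : ((j : Fin J) → EuclideanSpace ℝ (Fin (p j))) → ℝ) (lam : ℝ), 0 ≤ lam →
        L₀ w + (lam / (D : ℝ)) * ((∑ j, ‖ω j‖ ^ 2) + ∑ j, ∑ d, γ j d ^ 2) =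
          L₀ w + lam * ∑ j, ‖w j‖ ^ ((2 : ℝ) / (D : ℝ)) := by
  have hcard : ((Fintype.card (Fin (D - 1)) + 1 : ℕ) : ℝ) = D := by
    rw [Fintype.card_fin, Nat.sub_add_cancel (by omega)]
  have hgroup : ∀ j, ‖ω j‖ ^ 2 + ∑ d, γ j d ^ 2 = D * ‖w j‖ ^ ((2 : ℝ) / D) := fun j => by
    rw [hw j, sq_norm_add_sum_sq_eq_of_balanced (ω j) (γ j) (hbal j), hcard]
  have hpenalty : (1 / (D : ℝ)) * ((∑ j, ‖ω j‖ ^ 2) + ∑ j, ∑ d, γ j d ^ 2) =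
      ∑ j, ‖w j‖ ^ ((2 : ℝ) / (D : ℝ)) := by
    have hDpos : (0 : ℝ) < D := by positivity
    rw [← sum_add_distrib, sum_congr rfl fun j _ => hgroup j, ← mul_sum]
    field_simp
  refine ⟨hpenalty, fun L₀ lam _ => ?_⟩
  rw [div_eq_mul_one_div, mul_assoc, hpenalty]
end

section
/- Let D ≥ 2 be an integer and p ≥ 1. For every w ∈ ℝ^p, the infimum of (1/D)·(‖ω‖₂² + Σ_{d=1}^{D−1} γ_d²) over all ω ∈ ℝ^p and γ_1, …, γ_{D−1} ∈ ℝ satisfying w = (∏_{d=1}^{D−1} γ_d)·ω equals ‖w‖₂^{2/D}, and this infimum is attained exactly at the balanced representations of w. -/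
/-!
Write `w = (∏ γ_d) • ω` and consider the `D` nonnegative numbers `‖ω‖², γ_1², …, γ_{D-1}²`.
Their product is `‖w‖²` and their arithmetic mean is the penalty, so AM-GM gives
`‖w‖^{2/D} ≤ penalty`, with equality exactly when all `D` numbers agree, i.e. at the balanced
representations. A balanced representation exists: take every `γ_d = ‖w‖^{1/D}`.
-/

open Finset

namespace Real

lemma rpow_two_div_eq_sq_rpow {x : ℝ} (hx : 0 ≤ x) (n : ℝ) :
    x ^ (2 / n) = (x ^ 2) ^ (1 / n) := by
  rw [← rpow_natCast x 2, ← rpow_mul hx]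
  ring_nf

variable {ι : Type*} [Fintype ι] [Nonempty ι]

lemma sum_const_inv_card : ∑ _i : ι, 1 / (Fintype.card ι : ℝ) = 1 := by
  simp [Finset.card_univ]

theorem geom_mean_le_arith_mean_uniform (z : ι → ℝ) (hz : ∀ i, 0 ≤ z i) :
    (∏ i, z i) ^ (1 / (Fintype.card ι : ℝ)) ≤ 1 / (Fintype.card ι : ℝ) * ∑ i, z i := by
  rw [← finsetProd_rpow _ _ (fun i _ => hz i), mul_sum]
  exact geom_mean_le_arith_mean_weighted _ _ _ (fun _ _ => by positivity) sum_const_inv_card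
    (fun i _ => hz i)

theorem geom_mean_eq_arith_mean_uniform_iff (z : ι → ℝ) (hz : ∀ i, 0 ≤ z i) :
    (∏ i, z i) ^ (1 / (Fintype.card ι : ℝ)) = 1 / (Fintype.card ι : ℝ) * ∑ i, z i ↔
      ∀ i j, z i = z j := by
  rw [← finsetProd_rpow _ _ (fun i _ => hz i), mul_sum,
    geom_mean_eq_arith_mean_weighted_iff_of_pos _ _ _ (fun _ _ => by positivity)
      sum_const_inv_card (fun i _ => hz i)]
  simp

end Real

section Gating

variable {E : Type*} [NormedAddCommGroup E] {ι : Type*}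

/-- `none` indexes the primary weight `ω`, `some d` the gate `γ d`. -/
def gatingSqNorms (ω : E) (γ : ι → ℝ) : Option ι → ℝ :=
  fun o => o.elim (‖ω‖ ^ 2) fun d => γ d ^ 2

lemma gatingSqNorms_nonneg (ω : E) (γ : ι → ℝ) (o : Option ι) : 0 ≤ gatingSqNorms ω γ o := by
  cases o <;> exact sq_nonneg _

lemma sum_gatingSqNorms [Fintype ι] (ω : E) (γ : ι → ℝ) :
    ∑ o, gatingSqNorms ω γ o = ‖ω‖ ^ 2 + ∑ d, γ d ^ 2 :=
  Fintype.sum_option _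

lemma prod_gatingSqNorms [NormedSpace ℝ E] [Fintype ι] (ω : E) (γ : ι → ℝ) :
    ∏ o, gatingSqNorms ω γ o = ‖(∏ d, γ d) • ω‖ ^ 2 := by
  rw [Fintype.prod_option, norm_smul, Real.norm_eq_abs, mul_pow, sq_abs, ← prod_pow, mul_comm]
  rfl

lemma gatingSqNorms_all_eq_iff (ω : E) (γ : ι → ℝ) :
    (∀ i j, gatingSqNorms ω γ i = gatingSqNorms ω γ j) ↔ ∀ d, ‖ω‖ ^ 2 = γ d ^ 2 := by
  refine ⟨fun h d => h none (some d), fun h i j => ?_⟩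
  rcases i with _ | i <;> rcases j with _ | j
  exacts [rfl, h j, (h i).symm, (h i).symm.trans (h j)]

theorem norm_gated_rpow_le_gatingPenalty [NormedSpace ℝ E] [Fintype ι] (ω : E) (γ : ι → ℝ) :
    ‖(∏ d, γ d) • ω‖ ^ (2 / (Fintype.card ι + 1 : ℝ)) ≤
      1 / (Fintype.card ι + 1 : ℝ) * (‖ω‖ ^ 2 + ∑ d, γ d ^ 2) := by
  have := Real.geom_mean_le_arith_mean_uniform _ (gatingSqNorms_nonneg ω γ)
  rwa [prod_gatingSqNorms, sum_gatingSqNorms, Fintype.card_option, Nat.cast_succ,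
    ← Real.rpow_two_div_eq_sq_rpow (norm_nonneg _)] at this

theorem gatingPenalty_eq_iff_balanced [NormedSpace ℝ E] [Fintype ι] (ω : E) (γ : ι → ℝ) :
    1 / (Fintype.card ι + 1 : ℝ) * (‖ω‖ ^ 2 + ∑ d, γ d ^ 2) =
        ‖(∏ d, γ d) • ω‖ ^ (2 / (Fintype.card ι + 1 : ℝ)) ↔
      ∀ d, ‖ω‖ ^ 2 = γ d ^ 2 := by
  have := Real.geom_mean_eq_arith_mean_uniform_iff _ (gatingSqNorms_nonneg ω γ)
  rw [prod_gatingSqNorms, sum_gatingSqNorms, Fintype.card_option, Nat.cast_succ,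
    ← Real.rpow_two_div_eq_sq_rpow (norm_nonneg _), gatingSqNorms_all_eq_iff] at this
  rw [eq_comm, this]

theorem exists_balanced_gating [NormedSpace ℝ E] [Fintype ι] (w : E) :
    ∃ (ω : E) (γ : ι → ℝ), w = (∏ d, γ d) • ω ∧ ∀ d, ‖ω‖ ^ 2 = γ d ^ 2 := by
  rcases eq_or_ne w 0 with rfl | hw
  · exact ⟨0, 0, by simp, by simp⟩
  set k := Fintype.card ι
  set c := ‖w‖ ^ (1 / (k + 1 : ℝ))
  have hc : 0 < c := Real.rpow_pos_of_pos (norm_pos_iff.mpr hw) _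
  have hck : c ^ k * c = ‖w‖ := by
    rw [← pow_succ, ← Real.rpow_natCast, ← Real.rpow_mul (norm_nonneg w)]
    push_cast
    rw [one_div_mul_cancel (by positivity), Real.rpow_one]
  refine ⟨(c ^ k)⁻¹ • w, fun _ => c, ?_, fun _ => ?_⟩
  · rw [prod_const, card_univ, smul_inv_smul₀ (by positivity)]
  · rw [norm_smul, norm_inv, Real.norm_eq_abs, abs_of_pos (by positivity), ← hck,
      inv_mul_cancel_left₀ (by positivity)]

end Gating

theorem stmt_5_general (D p : ℕ) (hD : 2 ≤ D)
    (w : EuclideanSpace ℝ (Fin p)) :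
    IsLeast {r : ℝ | ∃ (ω : EuclideanSpace ℝ (Fin p)) (γ : Fin (D - 1) → ℝ),
        w = (∏ d, γ d) • ω ∧ r = (1 / (D : ℝ)) * (‖ω‖ ^ 2 + ∑ d, γ d ^ 2)}
      (‖w‖ ^ ((2 : ℝ) / (D : ℝ))) ∧
    ∀ (ω : EuclideanSpace ℝ (Fin p)) (γ : Fin (D - 1) → ℝ),
      w = (∏ d, γ d) • ω →
        ((1 / (D : ℝ)) * (‖ω‖ ^ 2 + ∑ d, γ d ^ 2) = ‖w‖ ^ ((2 : ℝ) / (D : ℝ)) ↔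
          ∀ d : Fin (D - 1), ‖ω‖ ^ 2 = γ d ^ 2) := by
  have hcard : (Fintype.card (Fin (D - 1)) + 1 : ℝ) = D := by
    rw [Fintype.card_fin]
    exact_mod_cast Nat.sub_add_cancel (by omega)
  refine ⟨⟨?_, ?_⟩, ?_⟩
  · obtain ⟨ω, γ, hw, hbal⟩ := exists_balanced_gating (ι := Fin (D - 1)) w
    refine ⟨ω, γ, hw, ?_⟩
    rw [hw, ← hcard]
    exact ((gatingPenalty_eq_iff_balanced ω γ).mpr hbal).symm
  · rintro r ⟨ω, γ, rfl, rfl⟩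
    rw [← hcard]
    exact norm_gated_rpow_le_gatingPenalty ω γ
  · rintro ω γ rfl
    rw [← hcard]
    exact gatingPenalty_eq_iff_balanced ω γ

/-- the infimum of the smooth surrogate penalty over all `D`-gating
representations of `w` equals `‖w‖₂^{2/D}` (and is attained), and it is attained
exactly at the balanced representations. -/
theorem stmt_5 (D p : ℕ) (hD : 2 ≤ D) (hp : 1 ≤ p)
    (w : EuclideanSpace ℝ (Fin p)) :
    IsLeast {r : ℝ | ∃ (ω : EuclideanSpace ℝ (Fin p)) (γ : Fin (D - 1) → ℝ),
        w = (∏ d, γ d) • ω ∧ r = (1 / (D : ℝ)) * (‖ω‖ ^ 2 + ∑ d, γ d ^ 2)}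
      (‖w‖ ^ ((2 : ℝ) / (D : ℝ))) ∧
    ∀ (ω : EuclideanSpace ℝ (Fin p)) (γ : Fin (D - 1) → ℝ),
      w = (∏ d, γ d) • ω →
        ((1 / (D : ℝ)) * (‖ω‖ ^ 2 + ∑ d, γ d ^ 2) = ‖w‖ ^ ((2 : ℝ) / (D : ℝ)) ↔
          ∀ d : Fin (D - 1), ‖ω‖ ^ 2 = γ d ^ 2) :=
  stmt_5_general D p hD w
end

section
/- Let D ≥ 2, λ > 0, and let L₀ : ℝ^p → ℝ be any function, where ℝ^p is partitioned into J groups of sizes p_1,…,p_J. Define the D-gated objective L(ω, Γ) = L₀(ω ▶ γ^⊙) + (λ/D)·(Σ_j ‖ω_j‖₂² + Σ_{j,d} γ_{j,d}²), where (ω ▶ γ^⊙)_j = (∏_{d=1}^{D−1} γ_{j,d})·ω_j. If (ω̂, Γ̂) is a local minimizer of L, then the gating parameters are balanced: ‖ω̂_j‖₂² = γ̂_{j,d}² for every group j ∈ {1,…,J} and every d ∈ {1,…,D−1}. -/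
private lemma stmt6_balance_aux (a b ε : ℝ) (hε : 0 < ε) (hanneg : 0 ≤ a) (hbnneg : 0 ≤ b)
    (hkey : ∀ t : ℝ, 0 < t → |t - 1| < ε → 0 ≤ (t ^ 2 - 1) * (a * t ^ 2 - b)) : a = b := by
  by_contra hne
  rcases lt_or_gt_of_ne hne with hab | hab
  · -- a < b : take t = 1 + δ slightly bigger than 1
    set δ : ℝ := min (min (ε / 2) 1) ((b - a) / (3 * a + 1)) with hδ
    have hδpos : 0 < δ := by
      apply lt_min (lt_min (by linarith) one_pos)
      apply div_pos (by linarith) (by linarith)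
    have hδε : δ < ε := lt_of_le_of_lt (le_trans (min_le_left _ _) (min_le_left _ _)) (by linarith)
    have hδ1 : δ ≤ 1 := le_trans (min_le_left _ _) (min_le_right _ _)
    have hδ2 : δ * (3 * a + 1) ≤ b - a := by
      have h3 : δ ≤ (b - a) / (3 * a + 1) :=
        min_le_right (min (ε / 2) 1) ((b - a) / (3 * a + 1))
      calc δ * (3 * a + 1) ≤ (b - a) / (3 * a + 1) * (3 * a + 1) :=
            mul_le_mul_of_nonneg_right h3 (by linarith)
        _ = b - a := div_mul_cancel₀ _ (by positivity : (3 * a + 1) ≠ 0)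
    clear_value δ
    have hk := hkey (1 + δ) (by linarith) (by rw [abs_of_nonneg (by linarith)]; linarith)
    have hf : 0 < (1 + δ) ^ 2 - 1 := by nlinarith [hδpos, sq_nonneg δ]
    have h2 : 0 ≤ a * (1 + δ) ^ 2 - b := by nlinarith [hk, hf]
    have hsq : a * δ ^ 2 ≤ a * δ := by nlinarith [mul_nonneg hanneg hδpos.le, hδ1]
    nlinarith [h2, hsq, hδ2, hδpos]
  · -- b < a : take t = 1 - δ slightly smaller than 1
    have hapos : 0 < a := lt_of_le_of_lt hbnneg hab
    set δ : ℝ := min (min (ε / 2) (1 / 2)) ((a - b) / (4 * a)) with hδ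
    have hδpos : 0 < δ := by
      apply lt_min (lt_min (by linarith) (by norm_num))
      apply div_pos (by linarith) (by linarith)
    have hδε : δ < ε := lt_of_le_of_lt (le_trans (min_le_left _ _) (min_le_left _ _)) (by linarith)
    have hδhalf : δ ≤ 1 / 2 := le_trans (min_le_left _ _) (min_le_right _ _)
    have hδ2 : δ * (4 * a) ≤ a - b := by
      have h3 : δ ≤ (a - b) / (4 * a) :=
        min_le_right (min (ε / 2) (1 / 2)) ((a - b) / (4 * a))
      calc δ * (4 * a) ≤ (a - b) / (4 * a) * (4 * a) :=
            mul_le_mul_of_nonneg_right h3 (by linarith)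
        _ = a - b := div_mul_cancel₀ _ (by positivity : (4 * a) ≠ 0)
    clear_value δ
    have hk := hkey (1 - δ) (by linarith) (by rw [abs_of_nonpos (by linarith)]; linarith)
    have hf : (1 - δ) ^ 2 - 1 < 0 := by nlinarith [hδpos, hδhalf]
    have h2 : a * (1 - δ) ^ 2 - b ≤ 0 := by nlinarith [hk, hf]
    nlinarith [h2, hδ2, mul_nonneg hapos.le (sq_nonneg δ), hab]



/-- any local minimizer of the `D`-gated objective has balanced
gating parameters. -/
theorem stmt_6 (D J : ℕ) (hD : 2 ≤ D) (p : Fin J → ℕ) (lam : ℝ) (hlam : 0 < lam)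
    (L₀ : ((j : Fin J) → EuclideanSpace ℝ (Fin (p j))) → ℝ)
    (ωhat : (j : Fin J) → EuclideanSpace ℝ (Fin (p j)))
    (Γhat : Fin J → Fin (D - 1) → ℝ)
    (hmin : IsLocalMin
      (fun q : ((j : Fin J) → EuclideanSpace ℝ (Fin (p j))) × (Fin J → Fin (D - 1) → ℝ) =>
        L₀ (fun j => (∏ d, q.2 j d) • q.1 j) +
          (lam / (D : ℝ)) * ((∑ j, ‖q.1 j‖ ^ 2) + ∑ j, ∑ d, q.2 j d ^ 2))
      (ωhat, Γhat)) :
    ∀ (j : Fin J) (d : Fin (D - 1)), ‖ωhat j‖ ^ 2 = Γhat j d ^ 2 := by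
  intro j d
  set F : ((j : Fin J) → EuclideanSpace ℝ (Fin (p j))) × (Fin J → Fin (D - 1) → ℝ) → ℝ :=
    fun q =>
        L₀ (fun j => (∏ d, q.2 j d) • q.1 j) +
          (lam / (D : ℝ)) * ((∑ j, ‖q.1 j‖ ^ 2) + ∑ j, ∑ d, q.2 j d ^ 2) with hF
  set a := ‖ωhat j‖ ^ 2 with ha
  set b := Γhat j d ^ 2 with hb
  set φ : ℝ → ((j : Fin J) → EuclideanSpace ℝ (Fin (p j))) × (Fin J → Fin (D - 1) → ℝ) :=
    fun t => (fun j' => (if j' = j then t else 1) • ωhat j',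
              fun j' d' => (if j' = j ∧ d' = d then t⁻¹ else 1) * Γhat j' d') with hφ
  have hφ1 : φ 1 = (ωhat, Γhat) := by
    simp [hφ]
  -- sums along the path
  have hS1 : ∀ t : ℝ, (∑ j', ‖(φ t).1 j'‖ ^ 2) = (∑ j', ‖ωhat j'‖ ^ 2) + (t ^ 2 - 1) * a := by
    intro t
    have hpt : ∀ j' : Fin J, ‖(φ t).1 j'‖ ^ 2
        = ‖ωhat j'‖ ^ 2 + (if j' = j then (t ^ 2 - 1) * a else 0) := by
      intro j'
      by_cases h : j' = j
      · subst h; simp [hφ, norm_smul, mul_pow, sq_abs, ha]; ring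
      · simp [hφ, h]
    simp_rw [hpt, Finset.sum_add_distrib, Finset.sum_ite_eq' Finset.univ j, Finset.mem_univ,
      if_true]
  have hS2 : ∀ t : ℝ, (∑ j', ∑ d', (φ t).2 j' d' ^ 2)
      = (∑ j', ∑ d', Γhat j' d' ^ 2) + ((t⁻¹) ^ 2 - 1) * b := by
    intro t
    have hpt : ∀ (j' : Fin J) (d' : Fin (D - 1)), (φ t).2 j' d' ^ 2
        = Γhat j' d' ^ 2 + (if j' = j ∧ d' = d then ((t⁻¹) ^ 2 - 1) * b else 0) := by
      intro j' d'
      by_cases h : j' = j ∧ d' = d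
      · obtain ⟨h1, h2⟩ := h; subst h1; subst h2
        simp [hφ, mul_pow, hb]; ring
      · simp [hφ, h]
    simp_rw [hpt, Finset.sum_add_distrib]
    have hin : ∀ j' : Fin J,
        (∑ d', if j' = j ∧ d' = d then ((t⁻¹) ^ 2 - 1) * b else 0)
          = if j' = j then ((t⁻¹) ^ 2 - 1) * b else 0 := by
      intro j'
      by_cases h : j' = j <;> simp [h]
    simp_rw [hin, Finset.sum_ite_eq' Finset.univ j, Finset.mem_univ, if_true]
  -- the gated vector is unchanged along the path
  have hgate : ∀ t : ℝ, t ≠ 0 →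
      (fun j' => (∏ d', (φ t).2 j' d') • (φ t).1 j')
        = (fun j' => (∏ d', Γhat j' d') • ωhat j') := by
    intro t ht
    funext j'
    by_cases h : j' = j
    · rw [h]
      have hprod : (∏ d', (φ t).2 j d') = t⁻¹ * ∏ d', Γhat j d' := by
        simp only [hφ, eq_self_iff_true, true_and]
        rw [Finset.prod_mul_distrib, Finset.prod_ite_eq' Finset.univ d fun _ => t⁻¹]
        simp
      rw [hprod]
      simp only [hφ, eq_self_iff_true, if_true]
      rw [smul_smul]
      congr 1
      field_simp
    · simp [hφ, h]
  -- value of F along the path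
  have hval : ∀ t : ℝ, t ≠ 0 →
      F (φ t) = F (ωhat, Γhat) + (lam / (D : ℝ)) * ((t ^ 2 - 1) * a + ((t⁻¹) ^ 2 - 1) * b) := by
    intro t ht
    have h1 := hS1 t
    have h2 := hS2 t
    simp only [hF]
    rw [hgate t ht, h1, h2]
    ring
  -- composed local minimum
  have hcont : ContinuousAt φ 1 := by
    apply ContinuousAt.prodMk
    · apply continuousAt_pi.2
      intro j'
      by_cases h : j' = j
      · subst h
        simp only [hφ, if_true]
        exact (continuousAt_id.smul continuousAt_const)
      · simp only [hφ, if_neg h]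
        exact continuousAt_const
    · apply continuousAt_pi.2
      intro j'
      apply continuousAt_pi.2
      intro d'
      by_cases h : j' = j ∧ d' = d
      · simp only [hφ, if_pos h]
        exact (continuousAt_inv₀ one_ne_zero).mul continuousAt_const
      · simp only [hφ, if_neg h]
        exact continuousAt_const
  have hmin' : IsLocalMin F (φ 1) := by rw [hφ1]; exact hmin
  have hcomp : IsLocalMin (F ∘ φ) 1 := hmin'.comp_continuous hcont
  obtain ⟨ε, hε, hloc⟩ := Metric.eventually_nhds_iff.1 hcomp
  -- key inequality near 1
  have hkey : ∀ t : ℝ, 0 < t → |t - 1| < ε → 0 ≤ (t ^ 2 - 1) * (a * t ^ 2 - b) := by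
    intro t ht hdist
    have h := hloc (y := t) (by simpa [Real.dist_eq] using hdist)
    simp only [Function.comp] at h
    rw [hval t (ne_of_gt ht), hφ1] at h
    have hDpos : (0 : ℝ) < (D : ℝ) := by
      have : (0 : ℕ) < D := by omega
      exact_mod_cast this
    have hcoef : 0 < lam / (D : ℝ) := div_pos hlam hDpos
    have hX : 0 ≤ (t ^ 2 - 1) * a + ((t⁻¹) ^ 2 - 1) * b := by
      nlinarith [h]
    have ht2 : 0 < t ^ 2 := by positivity
    have hinv : (t⁻¹) ^ 2 * t ^ 2 = 1 := by
      field_simp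
    nlinarith [mul_nonneg hX (le_of_lt ht2)]
  have hanneg : 0 ≤ a := by positivity
  have hbnneg : 0 ≤ b := by positivity
  exact stmt6_balance_aux a b ε hε hanneg hbnneg hkey
end

section
/- Let D ≥ 2, λ ≥ 0, and let L₀ : ℝ^p → ℝ be any function, where ℝ^p is partitioned into J groups. Suppose ŵ ∈ ℝ^p is a local minimizer of the non-smooth objective L_w(w) = L₀(w) + λ‖w‖_{2,2/D}^{2/D}. Then every balanced D-gating representation (ω̂, Γ̂) of ŵ — i.e., with ŵ_j = (∏_{d=1}^{D−1} γ̂_{j,d})·ω̂_j and ‖ω̂_j‖₂² = γ̂_{j,d}² for all j and d — is a local minimizer of the D-gated objective L(ω, Γ) = L₀(ω ▶ γ^⊙) + (λ/D)·(‖ω‖₂² + ‖Γ‖_F²). -/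
/-!
By AM–GM on the `D` numbers `‖ω‖², γ₁², …, γ_{D-1}²`, the gated penalty dominates the group
penalty pointwise, `‖(∏ γ_d) • ω‖ ^ (2/D) ≤ (‖ω‖² + ∑ γ_d²) / D`, with equality when
all `D` numbers agree, i.e. at balanced parameters. Hence the gated objective lies above the
pullback of `L_w` along the continuous map `(ω, Γ) ↦ ω ▶ γ^⊙` and touches it at a balanced
representation of `ŵ`, so a local minimum of `L_w` at `ŵ` pulls back to one of the gated
objective there.
-/

open Finset

theorem IsLocalMin.of_le_of_eq {X β : Type*} [TopologicalSpace X] [Preorder β] {f g : X → β}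
    {a : X} (hf : IsLocalMin f a) (hle : f ≤ g) (heq : g a = f a) : IsLocalMin g a := by
  filter_upwards [hf] with x hx
  exact heq ▸ hx.trans (hle x)

section Gating

variable {ι E : Type*} [Fintype ι] [SeminormedAddCommGroup E] [NormedSpace ℝ E]

theorem norm_prod_smul_rpow_le (g : ι → ℝ) (x : E) :
    ‖(∏ i, g i) • x‖ ^ (2 / (Fintype.card ι + 1 : ℝ)) ≤
      (‖x‖ ^ 2 + ∑ i, g i ^ 2) / (Fintype.card ι + 1) := by
  let z : Option ι → ℝ := fun o => o.elim (‖x‖ ^ 2) (g · ^ 2)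
  have hz : ∀ o ∈ univ, 0 ≤ z o := by
    rintro (_ | i) _ <;> simp only [z, Option.elim] <;> positivity
  have amgm :=
    Real.geom_mean_le_arith_mean univ (fun _ => 1) z (by simp) (by simp; positivity) hz
  have hprod : ∏ o, z o = ‖(∏ i, g i) • x‖ ^ 2 := by
    simp [z, Fintype.prod_option, norm_smul, mul_pow, prod_pow, ← abs_prod, mul_comm]
  simp only [Real.rpow_one, hprod, one_mul, sum_const, card_univ, Fintype.card_option,
    nsmul_eq_mul, mul_one, Nat.cast_add, Nat.cast_one, Fintype.sum_option] at amgm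
  rwa [← Real.rpow_natCast, ← Real.rpow_mul (norm_nonneg _), ← div_eq_mul_inv] at amgm

theorem norm_prod_smul_rpow_eq_of_sq_eq (g : ι → ℝ) (x : E) (hbal : ∀ i, ‖x‖ ^ 2 = g i ^ 2) :
    ‖(∏ i, g i) • x‖ ^ (2 / (Fintype.card ι + 1 : ℝ)) =
      (‖x‖ ^ 2 + ∑ i, g i ^ 2) / (Fintype.card ι + 1) := by
  have habs : ∀ i, |g i| = ‖x‖ := fun i => by
    rw [← sq_eq_sq₀ (abs_nonneg _) (norm_nonneg _), sq_abs, hbal]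
  have hnorm : ‖(∏ i, g i) • x‖ = ‖x‖ ^ (Fintype.card ι + 1) := by
    simp [norm_smul, habs, pow_succ]
  have hn : (Fintype.card ι + 1 : ℝ) ≠ 0 := by positivity
  have hsum : ∑ i, g i ^ 2 = Fintype.card ι * ‖x‖ ^ 2 := by simp [← hbal]
  rw [hnorm, hsum, ← Real.rpow_natCast, ← Real.rpow_mul (norm_nonneg _)]
  push_cast
  rw [mul_div_cancel₀ _ hn, Real.rpow_two]
  field_simp
  ring

variable {κ : Type*} [Fintype κ] {F : κ → Type*} [∀ j, SeminormedAddCommGroup (F j)]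
  [∀ j, NormedSpace ℝ (F j)]

theorem sum_norm_prod_smul_rpow_le (Γ : κ → ι → ℝ) (ω : ∀ j, F j) :
    ∑ j, ‖(∏ i, Γ j i) • ω j‖ ^ (2 / (Fintype.card ι + 1 : ℝ)) ≤
      (∑ j, ‖ω j‖ ^ 2 + ∑ j, ∑ i, Γ j i ^ 2) / (Fintype.card ι + 1) := by
  rw [← sum_add_distrib, sum_div]
  exact sum_le_sum fun j _ => norm_prod_smul_rpow_le (Γ j) (ω j)

theorem sum_norm_prod_smul_rpow_eq_of_sq_eq (Γ : κ → ι → ℝ) (ω : ∀ j, F j)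
    (hbal : ∀ j i, ‖ω j‖ ^ 2 = Γ j i ^ 2) :
    ∑ j, ‖(∏ i, Γ j i) • ω j‖ ^ (2 / (Fintype.card ι + 1 : ℝ)) =
      (∑ j, ‖ω j‖ ^ 2 + ∑ j, ∑ i, Γ j i ^ 2) / (Fintype.card ι + 1) := by
  rw [← sum_add_distrib, sum_div]
  exact sum_congr rfl fun j _ => norm_prod_smul_rpow_eq_of_sq_eq (Γ j) (ω j) (hbal j)

end Gating

/-- if `ŵ` is a local minimizer of the non-smooth `L_{2,2/D}`-regularized
objective, then every balanced `D`-gating representation of `ŵ` is a local minimizer of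
the `D`-gated objective. -/
theorem stmt_7 (D J : ℕ) (hD : 2 ≤ D) (p : Fin J → ℕ) (lam : ℝ) (hlam : 0 ≤ lam)
    (L₀ : ((j : Fin J) → EuclideanSpace ℝ (Fin (p j))) → ℝ)
    (what : (j : Fin J) → EuclideanSpace ℝ (Fin (p j)))
    (hmin : IsLocalMin
      (fun w : (j : Fin J) → EuclideanSpace ℝ (Fin (p j)) =>
        L₀ w + lam * ∑ j, ‖w j‖ ^ ((2 : ℝ) / (D : ℝ))) what)
    (ωhat : (j : Fin J) → EuclideanSpace ℝ (Fin (p j)))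
    (Γhat : Fin J → Fin (D - 1) → ℝ)
    (hrep : ∀ j, what j = (∏ d, Γhat j d) • ωhat j)
    (hbal : ∀ j d, ‖ωhat j‖ ^ 2 = Γhat j d ^ 2) :
    IsLocalMin
      (fun q : ((j : Fin J) → EuclideanSpace ℝ (Fin (p j))) × (Fin J → Fin (D - 1) → ℝ) =>
        L₀ (fun j => (∏ d, q.2 j d) • q.1 j) +
          (lam / (D : ℝ)) * ((∑ j, ‖q.1 j‖ ^ 2) + ∑ j, ∑ d, q.2 j d ^ 2))
      (ωhat, Γhat) := by
  have hcard : (D : ℝ) = Fintype.card (Fin (D - 1)) + 1 := by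
    rw [Fintype.card_fin]
    exact_mod_cast (Nat.sub_add_cancel (by omega : 1 ≤ D)).symm
  let Φ (q : ((j : Fin J) → EuclideanSpace ℝ (Fin (p j))) × (Fin J → Fin (D - 1) → ℝ)) :
      (j : Fin J) → EuclideanSpace ℝ (Fin (p j)) := fun j => (∏ d, q.2 j d) • q.1 j
  have hΦ : Φ (ωhat, Γhat) = what := funext fun j => (hrep j).symm
  have hcont : Continuous Φ := by fun_prop
  refine IsLocalMin.of_le_of_eq ((hΦ ▸ hmin).comp_continuous hcont.continuousAt)
    (fun q => ?_) ?_
  · simp only [Function.comp_apply, div_mul_eq_mul_div, mul_div_assoc, hcard]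
    gcongr
    exact sum_norm_prod_smul_rpow_le _ _
  · simp only [Function.comp_apply, div_mul_eq_mul_div, mul_div_assoc, hcard]
    rw [sum_norm_prod_smul_rpow_eq_of_sq_eq _ _ hbal]
end

section
/- Let D ≥ 2, λ > 0, and let L₀ : ℝ^p → ℝ be any function, where ℝ^p is partitioned into J groups. Suppose (ω̂, Γ̂) is a local minimizer of the D-gated objective L(ω, Γ) = L₀(ω ▶ γ^⊙) + (λ/D)·(‖ω‖₂² + ‖Γ‖_F²). Then the effective weight ŵ = ω̂ ▶ γ̂^⊙, whose j-th group is (∏_{d=1}^{D−1} γ̂_{j,d})·ω̂_j, is a local minimizer of the non-smooth objective L_w(w) = L₀(w) + λ‖w‖_{2,2/D}^{2/D}. -/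
/-!
Rescaling `ω_j ↦ t⁻¹ • ω_j`, `γ_{j,d} ↦ t γ_{j,d}` does not change the effective weight, so at a
local minimizer of the gated objective every gate is balanced: `γ_{j,d}² = ‖ω_j‖²`.
Conversely, a balanced factorization of `w_j`, with `|γ_{j,d}| = ‖ω_j‖ = ‖w_j‖^{1/D}`, has penalty
`‖ω_j‖² + ∑_d γ_{j,d}² = D ‖w_j‖^{2/D}` and depends continuously on `w`. With the signs read off
`Γ̂`, it is a continuous map sending `ŵ` to `(ω̂, Γ̂)` along which the gated objective equals the
non-smooth one, so local minimality pulls back along it.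
-/

open Filter Topology Finset

section Group

variable {E : Type*} [NormedAddCommGroup E] [NormedSpace ℝ E] {ι : Type*} [Fintype ι]

def gatedWeight (x : E × (ι → ℝ)) : E := (∏ d, x.2 d) • x.1

def gatedPenalty (x : E × (ι → ℝ)) : ℝ := ‖x.1‖ ^ 2 + ∑ d, x.2 d ^ 2

lemma exists_abs_eq_one_mul_of_sq_eq_sq {a b : ℝ} (h : a ^ 2 = b ^ 2) :
    ∃ s : ℝ, |s| = 1 ∧ a = s * b := by
  rcases sq_eq_sq_iff_eq_or_eq_neg.1 h with h | h
  · exact ⟨1, abs_one, by rw [h, one_mul]⟩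
  · exact ⟨-1, by simp, by rw [h, neg_one_mul]⟩

lemma eq_of_isLocalMin_sq_add_inv_sq {a b c : ℝ}
    (h : IsLocalMin (fun t : ℝ => c + a * t ^ 2 + b * t⁻¹ ^ 2) 1) : a = b := by
  have hderiv : HasDerivAt (fun t : ℝ => c + a * t ^ 2 + b * t⁻¹ ^ 2) (2 * a - 2 * b) 1 := by
    refine ((((hasDerivAt_pow 2 (1 : ℝ)).const_mul a).const_add c).add
      (((hasDerivAt_inv one_ne_zero).pow 2).const_mul b)).congr_deriv ?_
    norm_num
    ring
  linarith [h.hasDerivAt_eq_zero hderiv]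

lemma sq_eq_sq_norm_of_eventually_gatedPenalty_le {ω : E} {γ : ι → ℝ}
    (h : ∀ᶠ x in 𝓝 (ω, γ), gatedWeight x = gatedWeight (ω, γ) →
      gatedPenalty (ω, γ) ≤ gatedPenalty x) (d : ι) :
    γ d ^ 2 = ‖ω‖ ^ 2 := by
  classical
  set c : ℝ → E × (ι → ℝ) := fun t => (t⁻¹ • ω, Function.update γ d (t * γ d))
  have hc : ContinuousAt c 1 :=
    ((continuousAt_inv₀ one_ne_zero).smul continuousAt_const).prodMk
      (continuous_const.update d (continuous_id.mul continuous_const)).continuousAt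
  have hc_one : c 1 = (ω, γ) := by simp [c]
  have hweight : ∀ t ≠ 0, gatedWeight (c t) = gatedWeight (ω, γ) := by
    intro t ht
    simp only [gatedWeight, c, prod_update_of_mem (mem_univ d), smul_smul,
      prod_eq_mul_prod_sdiff_singleton_of_mem (mem_univ d) γ]
    field_simp
  have hpen : ∀ t, gatedPenalty (c t) =
      (gatedPenalty (ω, γ) - γ d ^ 2 - ‖ω‖ ^ 2) + γ d ^ 2 * t ^ 2 + ‖ω‖ ^ 2 * t⁻¹ ^ 2 := by
    intro t
    have hsq : (fun e => Function.update γ d (t * γ d) e ^ 2) =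
        Function.update (fun e => γ e ^ 2) d ((t * γ d) ^ 2) :=
      funext (Function.apply_update (fun _ y => y ^ 2) γ d (t * γ d))
    simp only [gatedPenalty, c, hsq]
    rw [sum_update_of_mem (mem_univ d), sum_eq_add_sum_sdiff_singleton_of_mem (mem_univ d),
      norm_smul, Real.norm_eq_abs, mul_pow, sq_abs]
    ring
  have hmin : IsLocalMin (gatedPenalty ∘ c) 1 := by
    filter_upwards [hc.eventually (hc_one ▸ h), eventually_ne_nhds one_ne_zero] with t ht ht0
    change gatedPenalty (c 1) ≤ gatedPenalty (c t)
    rw [hc_one] at ht ⊢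
    exact ht (hweight t ht0)
  exact eq_of_isLocalMin_sq_add_inv_sq (hmin.congr (Eventually.of_forall hpen))

/-- For signs `|σ d| = 1`, the primary weight and every gate have norm `‖v‖ ^ (1 / D)` with
`D = card ι + 1`; at `v = 0` the junk value `0 / 0 = 0` gives `(0, 0)`. -/
noncomputable def balancedFactor (σ : ι → ℝ) (v : E) : E × (ι → ℝ) :=
  (((∏ d, σ d) * ‖v‖ ^ ((Fintype.card ι : ℝ) + 1)⁻¹ / ‖v‖) • v,
    fun d => σ d * ‖v‖ ^ ((Fintype.card ι : ℝ) + 1)⁻¹)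

variable {σ : ι → ℝ}

lemma norm_balancedFactor_fst (v : E) :
    ‖(balancedFactor σ v).1‖ = |∏ d, σ d| * ‖v‖ ^ ((Fintype.card ι : ℝ) + 1)⁻¹ := by
  rcases eq_or_ne v 0 with rfl | hv
  · simp [balancedFactor, Real.zero_rpow (by positivity : ((Fintype.card ι : ℝ) + 1)⁻¹ ≠ 0)]
  · have : ‖v‖ ≠ 0 := norm_ne_zero_iff.2 hv
    simp only [balancedFactor, norm_smul, norm_div, norm_mul, Real.norm_eq_abs, abs_norm,
      abs_of_nonneg (Real.rpow_nonneg (norm_nonneg v) _)]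
    field_simp

lemma continuous_balancedFactor : Continuous (balancedFactor σ : E → E × (ι → ℝ)) := by
  have hroot : Continuous fun v : E => ‖v‖ ^ ((Fintype.card ι : ℝ) + 1)⁻¹ :=
    continuous_norm.rpow_const fun _ => Or.inr (by positivity)
  have hfst : Continuous fun v : E => (balancedFactor σ v).1 := by
    refine continuous_iff_continuousAt.2 fun v => ?_
    rcases eq_or_ne v 0 with rfl | hv
    · have h0 : (balancedFactor σ (0 : E)).1 = 0 := by simp [balancedFactor]
      rw [ContinuousAt, h0, tendsto_zero_iff_norm_tendsto_zero]
      simp only [norm_balancedFactor_fst]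
      simpa [Real.zero_rpow (by positivity : ((Fintype.card ι : ℝ) + 1)⁻¹ ≠ 0)] using
        (hroot.tendsto 0).const_mul |∏ d, σ d|
    · exact ((continuous_const.mul hroot).continuousAt.div continuous_norm.continuousAt
        (norm_ne_zero_iff.2 hv)).smul continuousAt_id
  exact hfst.prodMk (continuous_pi fun d => continuous_const.mul hroot)

lemma sq_prod_eq_one (hσ : ∀ d, |σ d| = 1) : (∏ d, σ d) ^ 2 = 1 := by
  rw [← sq_abs, abs_prod, prod_eq_one fun d _ => hσ d, one_pow]

lemma root_pow_card_add_one (x : ℝ) (hx : 0 ≤ x) :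
    (x ^ ((Fintype.card ι : ℝ) + 1)⁻¹) ^ (Fintype.card ι + 1) = x := by
  simpa using Real.rpow_inv_natCast_pow hx (Fintype.card ι).succ_ne_zero

lemma gatedWeight_balancedFactor (hσ : ∀ d, |σ d| = 1) (v : E) :
    gatedWeight (balancedFactor σ v) = v := by
  rcases eq_or_ne v 0 with rfl | hv
  · simp [gatedWeight, balancedFactor]
  simp only [gatedWeight, balancedFactor, prod_mul_distrib, prod_const, card_univ, smul_smul]
  convert one_smul ℝ v
  set r := ‖v‖ ^ ((Fintype.card ι : ℝ) + 1)⁻¹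
  calc (∏ d, σ d) * r ^ Fintype.card ι * ((∏ d, σ d) * r / ‖v‖)
      = (∏ d, σ d) ^ 2 * r ^ (Fintype.card ι + 1) / ‖v‖ := by ring
    _ = 1 := by
      rw [sq_prod_eq_one hσ, root_pow_card_add_one _ (norm_nonneg v), one_mul,
        div_self (norm_ne_zero_iff.2 hv)]

lemma gatedPenalty_balancedFactor (hσ : ∀ d, |σ d| = 1) (v : E) :
    gatedPenalty (balancedFactor σ v) =
      ((Fintype.card ι : ℝ) + 1) * ‖v‖ ^ (2 / ((Fintype.card ι : ℝ) + 1)) := by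
  have hσ2 : ∀ d, σ d ^ 2 = 1 := fun d => by rw [← sq_abs, hσ d, one_pow]
  have hroot : (‖v‖ ^ ((Fintype.card ι : ℝ) + 1)⁻¹) ^ 2 =
      ‖v‖ ^ (2 / ((Fintype.card ι : ℝ) + 1)) := by
    rw [← Real.rpow_natCast, ← Real.rpow_mul (norm_nonneg v)]
    norm_num [div_eq_inv_mul]
  rw [gatedPenalty, norm_balancedFactor_fst, abs_prod, prod_eq_one fun d _ => hσ d]
  simp only [balancedFactor, mul_pow, hσ2, one_mul, sum_const, card_univ, nsmul_eq_mul, hroot]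
  ring

lemma balancedFactor_gatedWeight (hσ : ∀ d, |σ d| = 1) (ω : E) :
    balancedFactor σ (gatedWeight (ω, fun d => σ d * ‖ω‖)) = (ω, fun d => σ d * ‖ω‖) := by
  set n := Fintype.card ι
  have hweight : gatedWeight (ω, fun d => σ d * ‖ω‖) = ((∏ d, σ d) * ‖ω‖ ^ n) • ω := by
    simp [gatedWeight, prod_mul_distrib, n]
  have hnorm : ‖((∏ d, σ d) * ‖ω‖ ^ n) • ω‖ = ‖ω‖ ^ (n + 1) := by
    rw [norm_smul, norm_mul, Real.norm_eq_abs, abs_prod, prod_eq_one fun d _ => hσ d, norm_pow,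
      norm_norm, one_mul, pow_succ]
  have hroot : (‖ω‖ ^ (n + 1)) ^ ((n : ℝ) + 1)⁻¹ = ‖ω‖ := by
    simpa using Real.pow_rpow_inv_natCast (norm_nonneg ω) n.succ_ne_zero
  rw [hweight, balancedFactor, hnorm, hroot, smul_smul]
  congr 1
  rcases eq_or_ne ω 0 with rfl | hω
  · simp
  convert one_smul ℝ ω
  have : ‖ω‖ ≠ 0 := norm_ne_zero_iff.2 hω
  calc (∏ d, σ d) * ‖ω‖ / ‖ω‖ ^ (n + 1) * ((∏ d, σ d) * ‖ω‖ ^ n)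
      = (∏ d, σ d) ^ 2 * (‖ω‖ ^ (n + 1) / ‖ω‖ ^ (n + 1)) := by ring
    _ = 1 := by rw [sq_prod_eq_one hσ, div_self (pow_ne_zero _ this), one_mul]

end Group

section Objective

variable {J : Type*} [Fintype J] {E : J → Type*} [∀ j, NormedAddCommGroup (E j)]
  [∀ j, NormedSpace ℝ (E j)] {ι : Type*} [Fintype ι]

def gatedObjective (L₀ : ((j : J) → E j) → ℝ) (C : ℝ) (q : ((j : J) → E j) × (J → ι → ℝ)) : ℝ :=
  L₀ (fun j => gatedWeight (q.1 j, q.2 j)) + C * ∑ j, gatedPenalty (q.1 j, q.2 j)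

/-- Changing a single group within the fiber of its gated weight leaves the data term unchanged,
so each group of a local minimizer locally minimizes its own penalty on that fiber. -/
lemma eventually_gatedPenalty_le_of_isLocalMin {L₀ : ((j : J) → E j) → ℝ} {C : ℝ} (hC : 0 < C)
    {ω : (j : J) → E j} {Γ : J → ι → ℝ} (h : IsLocalMin (gatedObjective L₀ C) (ω, Γ)) (j : J) :
    ∀ᶠ x in 𝓝 (ω j, Γ j), gatedWeight x = gatedWeight (ω j, Γ j) →
      gatedPenalty (ω j, Γ j) ≤ gatedPenalty x := by
  classical
  set u : E j × (ι → ℝ) → ((j : J) → E j) × (J → ι → ℝ) :=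
    fun x => (Function.update ω j x.1, Function.update Γ j x.2)
  have hu : Continuous u :=
    (continuous_const.update j continuous_fst).prodMk (continuous_const.update j continuous_snd)
  have hu_self : u (ω j, Γ j) = (ω, Γ) := by simp [u]
  have hobj : ∀ x, gatedWeight x = gatedWeight (ω j, Γ j) → gatedObjective L₀ C (u x) =
      L₀ (fun k => gatedWeight (ω k, Γ k)) +
        C * (gatedPenalty x + ∑ k ∈ univ \ {j}, gatedPenalty (ω k, Γ k)) := by
    intro x hx
    simp only [gatedObjective, u, Function.apply_update₂ (fun _ a b => gatedWeight (a, b)),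
      Function.apply_update₂ (fun _ a b => gatedPenalty (a, b)), hx, Function.update_eq_self,
      sum_update_of_mem (mem_univ j)]
  filter_upwards [hu.continuousAt.eventually (hu_self ▸ h)] with x hx hweight
  rw [hobj _ rfl, hobj x hweight] at hx
  linarith [le_of_mul_le_mul_left (le_of_add_le_add_left hx) hC]

theorem isLocalMin_add_rpow_norm_of_isLocalMin_gatedObjective {L₀ : ((j : J) → E j) → ℝ} {C : ℝ}
    (hC : 0 < C) {ω : (j : J) → E j} {Γ : J → ι → ℝ}
    (h : IsLocalMin (gatedObjective L₀ C) (ω, Γ)) :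
    IsLocalMin (fun w => L₀ w + C * ((Fintype.card ι : ℝ) + 1) *
        ∑ j, ‖w j‖ ^ (2 / ((Fintype.card ι : ℝ) + 1)))
      (fun j => gatedWeight (ω j, Γ j)) := by
  choose σ hσ hΓ using fun j d => exists_abs_eq_one_mul_of_sq_eq_sq
    (sq_eq_sq_norm_of_eventually_gatedPenalty_le
      (eventually_gatedPenalty_le_of_isLocalMin hC h j) d)
  set Φ : ((j : J) → E j) → ((j : J) → E j) × (J → ι → ℝ) :=
    fun w => (fun j => (balancedFactor (σ j) (w j)).1, fun j => (balancedFactor (σ j) (w j)).2)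
  have hΦ : Continuous Φ :=
    (continuous_pi fun j => (continuous_balancedFactor.comp (continuous_apply j)).fst).prodMk
      (continuous_pi fun j => (continuous_balancedFactor.comp (continuous_apply j)).snd)
  have hΦ_self : Φ (fun j => gatedWeight (ω j, Γ j)) = (ω, Γ) := by
    have hΓ' : ∀ j, Γ j = fun d => σ j d * ‖ω j‖ := fun j => funext (hΓ j)
    ext j <;> simp only [Φ, hΓ', balancedFactor_gatedWeight (hσ j)]
  have hobj : gatedObjective L₀ C ∘ Φ = fun w => L₀ w + C * ((Fintype.card ι : ℝ) + 1) *
      ∑ j, ‖w j‖ ^ (2 / ((Fintype.card ι : ℝ) + 1)) := by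
    funext w
    simp only [Function.comp_apply, gatedObjective, Φ, gatedWeight_balancedFactor (hσ _),
      gatedPenalty_balancedFactor (hσ _), mul_sum, mul_assoc]
  rw [← hΦ_self] at h
  exact hobj ▸ h.comp_continuous hΦ.continuousAt

end Objective

/-- if `(ω̂, Γ̂)` is a local minimizer of the `D`-gated objective, then the
effective weight `ŵ = ω̂ ▶ γ̂^⊙` is a local minimizer of the non-smooth
`L_{2,2/D}`-regularized objective. -/
theorem stmt_8 (D J : ℕ) (hD : 2 ≤ D) (p : Fin J → ℕ) (lam : ℝ) (hlam : 0 < lam)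
    (L₀ : ((j : Fin J) → EuclideanSpace ℝ (Fin (p j))) → ℝ)
    (ωhat : (j : Fin J) → EuclideanSpace ℝ (Fin (p j)))
    (Γhat : Fin J → Fin (D - 1) → ℝ)
    (hmin : IsLocalMin
      (fun q : ((j : Fin J) → EuclideanSpace ℝ (Fin (p j))) × (Fin J → Fin (D - 1) → ℝ) =>
        L₀ (fun j => (∏ d, q.2 j d) • q.1 j) +
          (lam / (D : ℝ)) * ((∑ j, ‖q.1 j‖ ^ 2) + ∑ j, ∑ d, q.2 j d ^ 2))
      (ωhat, Γhat)) :
    IsLocalMin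
      (fun w : (j : Fin J) → EuclideanSpace ℝ (Fin (p j)) =>
        L₀ w + lam * ∑ j, ‖w j‖ ^ ((2 : ℝ) / (D : ℝ)))
      (fun j => (∏ d, Γhat j d) • ωhat j) := by
  have hD_pos : (0 : ℝ) < D := by exact_mod_cast (by omega : 0 < D)
  have hcard : (Fintype.card (Fin (D - 1)) : ℝ) + 1 = D := by
    rw [Fintype.card_fin, Nat.cast_sub (by omega), Nat.cast_one, sub_add_cancel]
  have hgated : IsLocalMin (gatedObjective L₀ (lam / D)) (ωhat, Γhat) := by
    convert hmin using 2 with q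
    simp only [gatedObjective, gatedWeight, gatedPenalty, sum_add_distrib]
  have hw := isLocalMin_add_rpow_norm_of_isLocalMin_gatedObjective (div_pos hlam hD_pos) hgated
  rwa [hcard, div_mul_cancel₀ lam hD_pos.ne'] at hw
end

section
/- Let D ≥ 2, λ ≥ 0, p ≥ 1, and let ω : ℝ → ℝ^p, γ_1, …, γ_{D−1} : ℝ → ℝ be differentiable curves and g : ℝ → ℝ^p any curve, satisfying the gradient flow equations ω'(t) = −((∏_{d=1}^{D−1} γ_d(t))·g(t) + (2λ/D)·ω(t)) and, for each d ∈ {1,…,D−1}, γ_d'(t) = −((∏_{d'≠d} γ_{d'}(t))·⟨ω(t), g(t)⟩ + (2λ/D)·γ_d(t)). Then for any two distinct indices d, d' ∈ {1,…,D−1}, the scalar–scalar imbalance I(t) = γ_d(t)² − γ_{d'}(t)² satisfies the differential equation I'(t) = −(4λ/D)·I(t), and for any d' ∈ {1,…,D−1}, the vector–scalar imbalance Ĩ(t) = ‖ω(t)‖₂² − γ_{d'}(t)² satisfies Ĩ'(t) = −(4λ/D)·Ĩ(t). -/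
/-!
Along the flow, `d/dt γ_d² = -2 (∏ γ) ⟨ω, g⟩ - (4λ/D) γ_d²` for every gate and likewise
`d/dt ‖ω‖² = -2 (∏ γ) ⟨ω, g⟩ - (4λ/D) ‖ω‖²`: the loss-driven term is the same for every factor of
the product. It cancels in any difference of two squared factors, leaving only the decay from the
`L₂` penalty.
-/

open RealInnerProductSpace Finset

theorem HasDerivAt.sub_of_same_forcing {x y : ℝ → ℝ} {a b t : ℝ}
    (hx : HasDerivAt x (-2 * b - 2 * a * x t) t) (hy : HasDerivAt y (-2 * b - 2 * a * y t) t) :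
    HasDerivAt (fun s => x s - y s) (-(2 * a) * (x t - y t)) t :=
  (hx.sub hy).congr_deriv (by ring)

theorem HasDerivAt.sq_of_gate_flow {ι : Type*} [Fintype ι] [DecidableEq ι]
    {γ : ι → ℝ → ℝ} {a c t : ℝ} (d : ι)
    (h : HasDerivAt (γ d) (-((∏ d' ∈ univ.erase d, γ d' t) * c + a * γ d t)) t) :
    HasDerivAt (fun s => γ d s ^ 2) (-2 * ((∏ d', γ d' t) * c) - 2 * a * γ d t ^ 2) t := by
  refine (h.pow 2).congr_deriv ?_
  rw [← prod_erase_mul _ _ (mem_univ d)]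
  push_cast
  ring

theorem HasDerivAt.norm_sq_of_weight_flow {E : Type*} [NormedAddCommGroup E]
    [InnerProductSpace ℝ E] {ω g : ℝ → E} {a P t : ℝ}
    (h : HasDerivAt ω (-(P • g t + a • ω t)) t) :
    HasDerivAt (fun s => ‖ω s‖ ^ 2) (-2 * (P * ⟪ω t, g t⟫) - 2 * a * ‖ω t‖ ^ 2) t := by
  refine h.norm_sq.congr_deriv ?_
  rw [inner_neg_right, inner_add_right, real_inner_smul_right, real_inner_smul_right,
    real_inner_self_eq_norm_sq]
  ring

theorem stmt_9_general (D p : ℕ) (lam : ℝ)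
    (ω : ℝ → EuclideanSpace ℝ (Fin p)) (γ : Fin (D - 1) → ℝ → ℝ)
    (g : ℝ → EuclideanSpace ℝ (Fin p))
    (hω : ∀ t, HasDerivAt ω
      (-((∏ d, γ d t) • g t + (2 * lam / (D : ℝ)) • ω t)) t)
    (hγ : ∀ (d : Fin (D - 1)) (t : ℝ), HasDerivAt (γ d)
      (-((∏ d' ∈ Finset.univ.erase d, γ d' t) * ⟪ω t, g t⟫ + (2 * lam / (D : ℝ)) * γ d t)) t) :
    (∀ (d d' : Fin (D - 1)), d ≠ d' → ∀ t : ℝ,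
      HasDerivAt (fun s => γ d s ^ 2 - γ d' s ^ 2)
        (-(4 * lam / (D : ℝ)) * (γ d t ^ 2 - γ d' t ^ 2)) t) ∧
    (∀ (d' : Fin (D - 1)) (t : ℝ),
      HasDerivAt (fun s => ‖ω s‖ ^ 2 - γ d' s ^ 2)
        (-(4 * lam / (D : ℝ)) * (‖ω t‖ ^ 2 - γ d' t ^ 2)) t) := by
  have hrate : 4 * lam / (D : ℝ) = 2 * (2 * lam / D) := by ring
  rw [hrate]
  refine ⟨fun d d' _ t => ?_, fun d' t => ?_⟩
  · exact ((hγ d t).sq_of_gate_flow d).sub_of_same_forcing ((hγ d' t).sq_of_gate_flow d')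
  · exact (hω t).norm_sq_of_weight_flow.sub_of_same_forcing ((hγ d' t).sq_of_gate_flow d')

/-- under the gradient flow of the `L₂`-regularized `D`-gated objective,
each pair-wise imbalance satisfies the linear ODE `I' = -(4λ/D)·I`. -/
theorem stmt_9 (D p : ℕ) (hD : 2 ≤ D) (hp : 1 ≤ p) (lam : ℝ) (hlam : 0 ≤ lam)
    (ω : ℝ → EuclideanSpace ℝ (Fin p)) (γ : Fin (D - 1) → ℝ → ℝ)
    (g : ℝ → EuclideanSpace ℝ (Fin p))
    (hω : ∀ t, HasDerivAt ω
      (-((∏ d, γ d t) • g t + (2 * lam / (D : ℝ)) • ω t)) t)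
    (hγ : ∀ (d : Fin (D - 1)) (t : ℝ), HasDerivAt (γ d)
      (-((∏ d' ∈ Finset.univ.erase d, γ d' t) * ⟪ω t, g t⟫ + (2 * lam / (D : ℝ)) * γ d t)) t) :
    (∀ (d d' : Fin (D - 1)), d ≠ d' → ∀ t : ℝ,
      HasDerivAt (fun s => γ d s ^ 2 - γ d' s ^ 2)
        (-(4 * lam / (D : ℝ)) * (γ d t ^ 2 - γ d' t ^ 2)) t) ∧
    (∀ (d' : Fin (D - 1)) (t : ℝ),
      HasDerivAt (fun s => ‖ω s‖ ^ 2 - γ d' s ^ 2)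
        (-(4 * lam / (D : ℝ)) * (‖ω t‖ ^ 2 - γ d' t ^ 2)) t) :=
  stmt_9_general D p lam ω γ g hω hγ
end

section
/- Let D ≥ 2, λ ≥ 0, p ≥ 1, and let ω : ℝ → ℝ^p, γ_1, …, γ_{D−1} : ℝ → ℝ be differentiable curves and g : ℝ → ℝ^p any curve, satisfying the gradient flow equations ω'(t) = −((∏_{d=1}^{D−1} γ_d(t))·g(t) + (2λ/D)·ω(t)) and, for each d ∈ {1,…,D−1}, γ_d'(t) = −((∏_{d'≠d} γ_{d'}(t))·⟨ω(t), g(t)⟩ + (2λ/D)·γ_d(t)). Then for all t ≥ 0 and any two distinct indices d, d' ∈ {1,…,D−1}: γ_d(t)² − γ_{d'}(t)² = (γ_d(0)² − γ_{d'}(0)²)·exp(−(4λ/D)·t) and ‖ω(t)‖₂² − γ_{d'}(t)² = (‖ω(0)‖₂² − γ_{d'}(0)²)·exp(−(4λ/D)·t). In particular, for λ = 0 all pair-wise imbalances are conserved quantities, and for λ > 0 they decay exponentially. -/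
/-!
Write `μ = 2λ/D` and `s = ⟨ω, g⟩`. Along the flow every squared factor `q ∈ {‖ω‖², γ_1², …}`
obeys `q' = -(2 (∏ γ) s + 2μ q)`: the loss contributes the same term `2 (∏ γ) s` to each of
them. So each imbalance `q₁ - q₂` solves `u' = -2μ u`, and is therefore `u(0) e^{-2μ t}`.
-/

open RealInnerProductSpace

theorem eq_exp_smul_of_hasDerivAt_neg_smul {E : Type*} [NormedAddCommGroup E] [NormedSpace ℝ E]
    {f : ℝ → E} (c : ℝ) (hf : ∀ t, HasDerivAt f (-(c • f t)) t) (t : ℝ) :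
    f t = Real.exp (-c * t) • f 0 := by
  have hderiv : ∀ s, HasDerivAt (fun s => Real.exp (c * s) • f s) 0 s := by
    intro s
    have hexp : HasDerivAt (fun s => Real.exp (c * s)) (Real.exp (c * s) * c) s := by
      simpa using ((hasDerivAt_id s).const_mul c).exp
    refine (hexp.smul (hf s)).congr_deriv ?_
    rw [smul_neg, mul_smul, neg_add_cancel]
  have hconst : Real.exp (c * t) • f t = f 0 := by
    simpa using is_const_of_deriv_eq_zero (fun s => (hderiv s).differentiableAt)
      (fun s => (hderiv s).deriv) t 0
  rw [← hconst, smul_smul, ← Real.exp_add, neg_mul, neg_add_cancel, Real.exp_zero, one_smul]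

theorem sub_eq_mul_exp_of_hasDerivAt {u v a : ℝ → ℝ} (c : ℝ)
    (hu : ∀ t, HasDerivAt u (-(a t + c * u t)) t) (hv : ∀ t, HasDerivAt v (-(a t + c * v t)) t)
    (t : ℝ) : u t - v t = (u 0 - v 0) * Real.exp (-c * t) := by
  have hdiff : ∀ t, HasDerivAt (fun s => u s - v s) (-(c • (u t - v t))) t := fun t =>
    ((hu t).sub (hv t)).congr_deriv (by simp only [smul_eq_mul]; ring)
  rw [eq_exp_smul_of_hasDerivAt_neg_smul c hdiff t, smul_eq_mul, mul_comm]

theorem hasDerivAt_sq_of_gated_flow {ι : Type*} [Fintype ι] [DecidableEq ι]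
    {γ : ι → ℝ → ℝ} {s μ t : ℝ} (d : ι)
    (hγ : HasDerivAt (γ d) (-((∏ d' ∈ Finset.univ.erase d, γ d' t) * s + μ * γ d t)) t) :
    HasDerivAt (fun t => γ d t ^ 2) (-(2 * (∏ d', γ d' t) * s + 2 * μ * γ d t ^ 2)) t := by
  refine (hγ.pow 2).congr_deriv ?_
  rw [← Finset.mul_prod_erase Finset.univ (fun d' => γ d' t) (Finset.mem_univ d)]
  push_cast
  ring

theorem hasDerivAt_norm_sq_of_gated_flow {F : Type*} [NormedAddCommGroup F]
    [InnerProductSpace ℝ F] {ω g : ℝ → F} {P μ t : ℝ}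
    (hω : HasDerivAt ω (-(P • g t + μ • ω t)) t) :
    HasDerivAt (fun t => ‖ω t‖ ^ 2) (-(2 * P * ⟪ω t, g t⟫ + 2 * μ * ‖ω t‖ ^ 2)) t := by
  refine hω.norm_sq.congr_deriv ?_
  rw [inner_neg_right, inner_add_right, real_inner_smul_right, real_inner_smul_right,
    real_inner_self_eq_norm_sq]
  ring

theorem stmt_10_general (D p : ℕ) (lam : ℝ)
    (ω : ℝ → EuclideanSpace ℝ (Fin p)) (γ : Fin (D - 1) → ℝ → ℝ)
    (g : ℝ → EuclideanSpace ℝ (Fin p))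
    (hω : ∀ t, HasDerivAt ω
      (-((∏ d, γ d t) • g t + (2 * lam / (D : ℝ)) • ω t)) t)
    (hγ : ∀ (d : Fin (D - 1)) (t : ℝ), HasDerivAt (γ d)
      (-((∏ d' ∈ Finset.univ.erase d, γ d' t) * ⟪ω t, g t⟫ + (2 * lam / (D : ℝ)) * γ d t)) t) :
    ∀ t : ℝ, 0 ≤ t →
      (∀ (d d' : Fin (D - 1)), d ≠ d' →
        γ d t ^ 2 - γ d' t ^ 2 =
          (γ d 0 ^ 2 - γ d' 0 ^ 2) * Real.exp (-(4 * lam / (D : ℝ)) * t)) ∧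
      (∀ d' : Fin (D - 1),
        ‖ω t‖ ^ 2 - γ d' t ^ 2 =
          (‖ω 0‖ ^ 2 - γ d' 0 ^ 2) * Real.exp (-(4 * lam / (D : ℝ)) * t)) := by
  have hrate : 4 * lam / (D : ℝ) = 2 * (2 * lam / D) := by ring
  have hγsq := fun d t => hasDerivAt_sq_of_gated_flow d (hγ d t)
  have hωsq := fun t => hasDerivAt_norm_sq_of_gated_flow (hω t)
  intro t _
  rw [hrate]
  exact ⟨fun d d' _ => sub_eq_mul_exp_of_hasDerivAt _ (hγsq d) (hγsq d') t,
    fun d' => sub_eq_mul_exp_of_hasDerivAt _ hωsq (hγsq d') t⟩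

/-- under the gradient flow of the `L₂`-regularized `D`-gated objective,
all pair-wise imbalances decay exponentially at rate `4λ/D` from their initial values
(and are conserved for `λ = 0`). -/
theorem stmt_10 (D p : ℕ) (hD : 2 ≤ D) (hp : 1 ≤ p) (lam : ℝ) (hlam : 0 ≤ lam)
    (ω : ℝ → EuclideanSpace ℝ (Fin p)) (γ : Fin (D - 1) → ℝ → ℝ)
    (g : ℝ → EuclideanSpace ℝ (Fin p))
    (hω : ∀ t, HasDerivAt ω
      (-((∏ d, γ d t) • g t + (2 * lam / (D : ℝ)) • ω t)) t)
    (hγ : ∀ (d : Fin (D - 1)) (t : ℝ), HasDerivAt (γ d)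
      (-((∏ d' ∈ Finset.univ.erase d, γ d' t) * ⟪ω t, g t⟫ + (2 * lam / (D : ℝ)) * γ d t)) t) :
    ∀ t : ℝ, 0 ≤ t →
      (∀ (d d' : Fin (D - 1)), d ≠ d' →
        γ d t ^ 2 - γ d' t ^ 2 =
          (γ d 0 ^ 2 - γ d' 0 ^ 2) * Real.exp (-(4 * lam / (D : ℝ)) * t)) ∧
      (∀ d' : Fin (D - 1),
        ‖ω t‖ ^ 2 - γ d' t ^ 2 =
          (‖ω 0‖ ^ 2 - γ d' 0 ^ 2) * Real.exp (-(4 * lam / (D : ℝ)) * t)) :=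
  stmt_10_general D p lam ω γ g hω hγ
end

section
/- Let D ≥ 2, λ > 0, and let ℝ^p be partitioned into J groups. For each group j ∈ {1,…,J}, let ω_j : ℝ → ℝ^{p_j} and γ_{j,1}, …, γ_{j,D−1} : ℝ → ℝ be differentiable curves and g_j : ℝ → ℝ^{p_j} any curve satisfying the gradient flow equations ω_j'(t) = −((∏_{d=1}^{D−1} γ_{j,d}(t))·g_j(t) + (2λ/D)·ω_j(t)) and γ_{j,d}'(t) = −((∏_{d'≠d} γ_{j,d'}(t))·⟨ω_j(t), g_j(t)⟩ + (2λ/D)·γ_{j,d}(t)) for each d. For group j define the squared factors a_{j,1}(t) = ‖ω_j(t)‖₂², a_{j,d+1}(t) = γ_{j,d}(t)² (d ∈ {1,…,D−1}), the effective group weight w_j(t) = (∏_{d=1}^{D−1} γ_{j,d}(t))·ω_j(t), and the group misalignment M_j(t) = (1/D)·Σ_{d=1}^{D} a_{j,d}(t) − ‖w_j(t)‖₂^{2/D}. Let I_max(0) = max_{j} (max_{d} a_{j,d}(0) − min_{d} a_{j,d}(0)). Then for all t ≥ 0, 0 ≤ Σ_{j=1}^{J} M_j(t) ≤ J·I_max(0)·exp(−(4λ/D)·t);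 equivalently, the difference between the D-gated objective and the L_{2,2/D}-regularized objective evaluated along the trajectory, which equals λ·Σ_j M_j(t), is bounded by λ·J·I_max(0)·exp(−(4λ/D)·t). -/
/-!
Along the flow every squared factor `a_{j,d}` of group `j` satisfies the same linear equation
`a' = -2 (∏_d γ_{j,d}) ⟪ω_j, g_j⟫ - (4λ/D) a`: the gradient enters only through a term common
to all factors of the group. Hence all pairwise differences, and so the spread
`max_d a_{j,d} - min_d a_{j,d}`, decay like `exp(-(4λ/D) t)`. Since `∏_d a_{j,d} = ‖w_j‖₂²`,
the misalignment `M_j` is the arithmetic mean minus the geometric mean of the `a_{j,d}`, which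
AM-GM places between `0` and their spread.
-/

open RealInnerProductSpace Finset

theorem eq_mul_exp_of_hasDerivAt {f : ℝ → ℝ} {c : ℝ}
    (hf : ∀ t, HasDerivAt f (-c * f t) t) (t : ℝ) :
    f t = f 0 * Real.exp (-c * t) := by
  have hconst : ∀ s, HasDerivAt (fun u => f u * Real.exp (c * u)) 0 s := fun s => by
    have hexp : HasDerivAt (fun u => Real.exp (c * u)) (Real.exp (c * s) * c) s := by
      simpa using ((hasDerivAt_id s).const_mul c).exp
    exact ((hf s).mul hexp).congr_deriv (by ring)
  have heq := is_const_of_deriv_eq_zero (fun s => (hconst s).differentiableAt)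
    (fun s => (hconst s).deriv) t 0
  simp only [mul_zero, Real.exp_zero, mul_one] at heq
  rw [← heq, mul_assoc, ← Real.exp_add]
  simp

theorem sub_eq_mul_exp_of_hasDerivAt_s12 {f₁ f₂ h : ℝ → ℝ} {c : ℝ}
    (hf₁ : ∀ t, HasDerivAt f₁ (h t - c * f₁ t) t) (hf₂ : ∀ t, HasDerivAt f₂ (h t - c * f₂ t) t)
    (t : ℝ) :
    f₁ t - f₂ t = (f₁ 0 - f₂ 0) * Real.exp (-c * t) :=
  eq_mul_exp_of_hasDerivAt (f := fun u => f₁ u - f₂ u)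
    (fun s => ((hf₁ s).sub (hf₂ s)).congr_deriv (by ring)) t

theorem sup'_sub_inf'_le_mul_exp {ι : Type*} {s : Finset ι} (hs : s.Nonempty)
    {f : ι → ℝ → ℝ} {h : ℝ → ℝ} {c : ℝ} (hf : ∀ i t, HasDerivAt (f i) (h t - c * f i t) t)
    (t : ℝ) :
    s.sup' hs (f · t) - s.inf' hs (f · t) ≤
      (s.sup' hs (f · 0) - s.inf' hs (f · 0)) * Real.exp (-c * t) := by
  obtain ⟨i, hi, hmax⟩ := s.exists_mem_eq_sup' hs (f · t)
  obtain ⟨i', hi', hmin⟩ := s.exists_mem_eq_inf' hs (f · t)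
  rw [hmax, hmin, sub_eq_mul_exp_of_hasDerivAt_s12 (hf i) (hf i') t]
  exact mul_le_mul_of_nonneg_right (sub_le_sub (s.le_sup' (f · 0) hi) (s.inf'_le (f · 0) hi'))
    (Real.exp_pos _).le

theorem geom_mean_le_arith_mean_unweighted {ι : Type*} {s : Finset ι} (hs : s.Nonempty)
    {z : ι → ℝ} (hz : ∀ i ∈ s, 0 ≤ z i) :
    (∏ i ∈ s, z i) ^ ((#s : ℝ)⁻¹) ≤ 1 / #s * ∑ i ∈ s, z i := by
  simpa [div_eq_inv_mul] using
    Real.geom_mean_le_arith_mean s (fun _ => 1) z (fun _ _ => zero_le_one) (by simpa) hz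

theorem inf'_le_geom_mean {ι : Type*} {s : Finset ι} (hs : s.Nonempty)
    {z : ι → ℝ} (hz : ∀ i ∈ s, 0 ≤ z i) :
    s.inf' hs z ≤ (∏ i ∈ s, z i) ^ ((#s : ℝ)⁻¹) := by
  obtain ⟨i, hi, hmin⟩ := s.exists_mem_eq_inf' hs z
  have hmin_nonneg : 0 ≤ s.inf' hs z := hmin ▸ hz i hi
  have hpow : s.inf' hs z ^ #s ≤ ∏ i ∈ s, z i := by
    simpa using prod_le_prod (fun _ _ => hmin_nonneg) (fun j hj => s.inf'_le z hj)
  calc s.inf' hs z = (s.inf' hs z ^ #s) ^ ((#s : ℝ)⁻¹) := by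
        rw [← Real.rpow_natCast, ← Real.rpow_mul hmin_nonneg,
          mul_inv_cancel₀ (by simpa using hs.card_ne_zero), Real.rpow_one]
    _ ≤ (∏ i ∈ s, z i) ^ ((#s : ℝ)⁻¹) := by gcongr

theorem arith_mean_le_sup' {ι : Type*} {s : Finset ι} (hs : s.Nonempty) (z : ι → ℝ) :
    1 / #s * ∑ i ∈ s, z i ≤ s.sup' hs z := by
  have hcard : (0 : ℝ) < #s := by exact_mod_cast hs.card_pos
  rw [one_div, inv_mul_le_iff₀ hcard, ← nsmul_eq_mul]
  exact s.sum_le_card_nsmul z _ fun i hi => s.le_sup' z hi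

theorem arith_mean_sub_geom_mean_mem_Icc {ι : Type*} {s : Finset ι} (hs : s.Nonempty)
    {z : ι → ℝ} (hz : ∀ i ∈ s, 0 ≤ z i) :
    1 / #s * ∑ i ∈ s, z i - (∏ i ∈ s, z i) ^ ((#s : ℝ)⁻¹) ∈
      Set.Icc 0 (s.sup' hs z - s.inf' hs z) :=
  ⟨sub_nonneg.2 (geom_mean_le_arith_mean_unweighted hs hz),
    sub_le_sub (arith_mean_le_sup' hs z) (inf'_le_geom_mean hs hz)⟩

theorem sum_eq_norm_sq_add_sum_sq {E : Type*} [NormedAddCommGroup E] {n : ℕ} {x : E}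
    {γ : Fin n → ℝ} {a : Fin (n + 1) → ℝ} (ha0 : a 0 = ‖x‖ ^ 2) (haS : ∀ d, a d.succ = γ d ^ 2) :
    ∑ d, a d = ‖x‖ ^ 2 + ∑ d, γ d ^ 2 := by
  simp [Fin.sum_univ_succ, ha0, haS]

theorem prod_rpow_eq_norm_smul_rpow {E : Type*} [NormedAddCommGroup E] [NormedSpace ℝ E] {n : ℕ}
    {x : E} {γ : Fin n → ℝ} {a : Fin (n + 1) → ℝ} (ha0 : a 0 = ‖x‖ ^ 2)
    (haS : ∀ d, a d.succ = γ d ^ 2) :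
    (∏ d, a d) ^ (((n + 1 : ℕ) : ℝ)⁻¹) = ‖(∏ d, γ d) • x‖ ^ ((2 : ℝ) / ((n + 1 : ℕ) : ℝ)) := by
  rw [div_eq_mul_inv, Real.rpow_mul (norm_nonneg _), Real.rpow_two, norm_smul,
    Real.norm_eq_abs, mul_pow, sq_abs, ← prod_pow]
  simp [Fin.prod_univ_succ, ha0, haS, mul_comm]

section GatedGroup

variable {E : Type*} [NormedAddCommGroup E] [InnerProductSpace ℝ E] {n : ℕ}
  {ω g : ℝ → E} {γ : Fin n → ℝ → ℝ} {k : ℝ} {a : Fin (n + 1) → ℝ → ℝ}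

theorem hasDerivAt_factor_of_gatedFlow
    (hω : ∀ t, HasDerivAt ω (-((∏ d, γ d t) • g t + k • ω t)) t)
    (hγ : ∀ d t, HasDerivAt (γ d) (-((∏ d' ∈ univ.erase d, γ d' t) * ⟪ω t, g t⟫ + k * γ d t)) t)
    (ha0 : ∀ t, a 0 t = ‖ω t‖ ^ 2) (haS : ∀ d t, a d.succ t = γ d t ^ 2) (d : Fin (n + 1))
    (t : ℝ) :
    HasDerivAt (a d) (-2 * (∏ d, γ d t) * ⟪ω t, g t⟫ - 2 * k * a d t) t := by
  cases d using Fin.cases with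
  | zero =>
    rw [show a 0 = (‖ω ·‖ ^ 2) from funext ha0]
    refine (hω t).norm_sq.congr_deriv ?_
    simp only [inner_neg_right, inner_add_right, real_inner_smul_right, real_inner_self_eq_norm_sq]
    ring
  | succ d =>
    rw [show a d.succ = (γ d · ^ 2) from funext (haS d),
      ← mul_prod_erase univ (γ · t) (mem_univ d)]
    exact ((hγ d t).pow 2).congr_deriv (by push_cast; ring)

theorem misalignment_mem_Icc_of_gatedFlow
    (hω : ∀ t, HasDerivAt ω (-((∏ d, γ d t) • g t + k • ω t)) t)
    (hγ : ∀ d t, HasDerivAt (γ d) (-((∏ d' ∈ univ.erase d, γ d' t) * ⟪ω t, g t⟫ + k * γ d t)) t)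
    (ha0 : ∀ t, a 0 t = ‖ω t‖ ^ 2) (haS : ∀ d t, a d.succ t = γ d t ^ 2) (t : ℝ) :
    1 / ((n + 1 : ℕ) : ℝ) * ∑ d, a d t - ‖(∏ d, γ d t) • ω t‖ ^ ((2 : ℝ) / ((n + 1 : ℕ) : ℝ)) ∈
      Set.Icc 0 ((univ.sup' univ_nonempty (a · 0) - univ.inf' univ_nonempty (a · 0)) *
        Real.exp (-(2 * k) * t)) := by
  have ha_nonneg : ∀ d ∈ univ, 0 ≤ a d t := fun d _ => by
    cases d using Fin.cases <;> simp only [ha0, haS] <;> positivity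
  have hmean := arith_mean_sub_geom_mean_mem_Icc univ_nonempty ha_nonneg
  rw [card_univ, Fintype.card_fin, prod_rpow_eq_norm_smul_rpow (ha0 t) (haS · t)] at hmean
  exact ⟨hmean.1, hmean.2.trans (sup'_sub_inf'_le_mul_exp univ_nonempty
    (h := fun t => -2 * (∏ d, γ d t) * ⟪ω t, g t⟫)
    (hasDerivAt_factor_of_gatedFlow hω hγ ha0 haS) t)⟩

end GatedGroup

/-- under the gradient flow of the `L₂`-regularized `D`-gated objective,
the total misalignment `Σ_j M_j(t)` between the surrogate penalty and the structured
`L_{2,2/D}` penalty is nonnegative and bounded by `J·I_max(0)·exp(−(4λ/D)t)`; equivalently,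
the difference between the `D`-gated objective and the `L_{2,2/D}`-regularized objective,
which equals `λ·Σ_j M_j(t)`, is bounded by `λ·J·I_max(0)·exp(−(4λ/D)t)`. -/
theorem stmt_12 (D J : ℕ) (hD : 2 ≤ D) (hJ : 1 ≤ J) (p : Fin J → ℕ)
    (lam : ℝ) (hlam : 0 < lam)
    (ω : (j : Fin J) → ℝ → EuclideanSpace ℝ (Fin (p j)))
    (γ : Fin J → Fin (D - 1) → ℝ → ℝ)
    (g : (j : Fin J) → ℝ → EuclideanSpace ℝ (Fin (p j)))
    (hω : ∀ (j : Fin J) (t : ℝ), HasDerivAt (ω j)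
      (-((∏ d, γ j d t) • g j t + (2 * lam / (D : ℝ)) • ω j t)) t)
    (hγ : ∀ (j : Fin J) (d : Fin (D - 1)) (t : ℝ), HasDerivAt (γ j d)
      (-((∏ d' ∈ Finset.univ.erase d, γ j d' t) * ⟪ω j t, g j t⟫ +
          (2 * lam / (D : ℝ)) * γ j d t)) t)
    -- the squared factors `a_{j,1} = ‖ω_j‖₂²`, `a_{j,d+1} = γ_{j,d}²`
    (a : Fin J → Fin D → ℝ → ℝ)
    (ha0 : ∀ (j : Fin J) (t : ℝ), a j ⟨0, by omega⟩ t = ‖ω j t‖ ^ 2)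
    (haS : ∀ (j : Fin J) (d : Fin (D - 1)) (t : ℝ),
      a j ⟨d.val + 1, by have := d.isLt; omega⟩ t = γ j d t ^ 2)
    -- the group misalignments `M_j`
    (M : Fin J → ℝ → ℝ)
    (hM : ∀ (j : Fin J) (t : ℝ), M j t =
      (1 / (D : ℝ)) * (∑ d : Fin D, a j d t) -
        ‖(∏ d, γ j d t) • ω j t‖ ^ ((2 : ℝ) / (D : ℝ)))
    -- the maximal initial imbalance `I_max(0)`
    (Imax : ℝ)
    (hImax : Imax = Finset.univ.sup' ⟨⟨0, hJ⟩, Finset.mem_univ _⟩ (fun j : Fin J =>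
      Finset.univ.sup' ⟨⟨0, by omega⟩, Finset.mem_univ _⟩ (fun d : Fin D => a j d 0) -
        Finset.univ.inf' ⟨⟨0, by omega⟩, Finset.mem_univ _⟩ (fun d : Fin D => a j d 0))) :
    ∀ t : ℝ, 0 ≤ t →
      (0 ≤ ∑ j, M j t ∧
        ∑ j, M j t ≤ (J : ℝ) * Imax * Real.exp (-(4 * lam / (D : ℝ)) * t)) ∧
      ∀ L₀ : ((j : Fin J) → EuclideanSpace ℝ (Fin (p j))) → ℝ,
        (L₀ (fun j => (∏ d, γ j d t) • ω j t) +
            (lam / (D : ℝ)) * ((∑ j, ‖ω j t‖ ^ 2) + ∑ j, ∑ d, γ j d t ^ 2)) -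
          (L₀ (fun j => (∏ d, γ j d t) • ω j t) +
            lam * ∑ j, ‖(∏ d, γ j d t) • ω j t‖ ^ ((2 : ℝ) / (D : ℝ)))
          ≤ lam * ((J : ℝ) * Imax * Real.exp (-(4 * lam / (D : ℝ)) * t)) := by
  obtain ⟨n, rfl⟩ : ∃ n, D = n + 1 := ⟨D - 1, by omega⟩
  intro t _
  have hrate : -(4 * lam / ((n + 1 : ℕ) : ℝ)) * t = -(2 * (2 * lam / ((n + 1 : ℕ) : ℝ))) * t := by
    ring
  have hM_bound :
      ∀ j, M j t ∈ Set.Icc 0 (Imax * Real.exp (-(4 * lam / ((n + 1 : ℕ) : ℝ)) * t)) := by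
    intro j
    obtain ⟨hlow, hhigh⟩ := misalignment_mem_Icc_of_gatedFlow (hω j) (hγ j) (ha0 j) (haS j) t
    refine ⟨hM j t ▸ hlow, hM j t ▸ hhigh.trans ?_⟩
    rw [hrate, hImax]
    gcongr
    exact le_sup' (fun j : Fin J => univ.sup' _ (a j · 0) - univ.inf' _ (a j · 0)) (mem_univ j)
  have hsum_bound : 0 ≤ ∑ j, M j t ∧
      ∑ j, M j t ≤ (J : ℝ) * Imax * Real.exp (-(4 * lam / ((n + 1 : ℕ) : ℝ)) * t) := by
    refine ⟨sum_nonneg fun j _ => (hM_bound j).1, ?_⟩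
    simpa [mul_assoc] using sum_le_sum fun j (_ : j ∈ univ) => (hM_bound j).2
  refine ⟨hsum_bound, fun L₀ => le_of_eq_of_le ?_ (mul_le_mul_of_nonneg_left hsum_bound.2 hlam.le)⟩
  have hsum_factors : ∀ j, ∑ d, a j d t = ‖ω j t‖ ^ 2 + ∑ d, γ j d t ^ 2 :=
    fun j => sum_eq_norm_sq_add_sum_sq (ha0 j t) (haS j · t)
  simp only [hM, hsum_factors, sum_sub_distrib, ← mul_sum, sum_add_distrib]
  ring
end

section
/- Let D ≥ 2, λ ≥ 0, η > 0, p ≥ 1, and let ω ∈ ℝ^p, γ_1, …, γ_{D−1} ∈ ℝ, g ∈ ℝ^p. Define one gradient descent step by ω⁺ = ω − η·((∏_{d=1}^{D−1} γ_d)·g + (2λ/D)·ω) and, for each d, γ_d⁺ = γ_d − η·((∏_{d'≠d} γ_{d'})·⟨ω, g⟩ + (2λ/D)·γ_d). Then for every d ∈ {1,…,D−1}, the vector–scalar imbalance satisfies the exact identity ‖ω⁺‖₂² − (γ_d⁺)² = (1 − 4λη/D)·(‖ω‖₂² − γ_d²) + η²·( ‖(∏_{d'=1}^{D−1} γ_{d'})·g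 + (2λ/D)·ω‖₂² − ((∏_{d'≠d} γ_{d'})·⟨ω, g⟩ + (2λ/D)·γ_d)² ). -/
open RealInnerProductSpace

/-- exact one-step evolution of the vector–scalar imbalance under gradient
descent on the `L₂`-regularized `D`-gated objective. -/
theorem stmt_13 (D p : ℕ) (hD : 2 ≤ D) (hp : 1 ≤ p) (lam η : ℝ)
    (hlam : 0 ≤ lam) (hη : 0 < η)
    (ω g : EuclideanSpace ℝ (Fin p)) (γ : Fin (D - 1) → ℝ) :
    ∀ d : Fin (D - 1),
      ‖ω - η • ((∏ d', γ d') • g + (2 * lam / (D : ℝ)) • ω)‖ ^ 2 -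
          (γ d - η * ((∏ d' ∈ Finset.univ.erase d, γ d') * ⟪ω, g⟫ +
            (2 * lam / (D : ℝ)) * γ d)) ^ 2 =
        (1 - 4 * lam * η / (D : ℝ)) * (‖ω‖ ^ 2 - γ d ^ 2) +
          η ^ 2 * (‖(∏ d', γ d') • g + (2 * lam / (D : ℝ)) • ω‖ ^ 2 -
            ((∏ d' ∈ Finset.univ.erase d, γ d') * ⟪ω, g⟫ +
              (2 * lam / (D : ℝ)) * γ d) ^ 2) := by
  intro d
  set c : ℝ := 2 * lam / (D : ℝ) with hc
  set v : EuclideanSpace ℝ (Fin p) := (∏ d', γ d') • g + c • ω with hv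
  have hPQ : γ d * ∏ d' ∈ Finset.univ.erase d, γ d' = ∏ d', γ d' :=
    Finset.mul_prod_erase _ _ (Finset.mem_univ d)
  have h1 : ‖ω - η • v‖ ^ 2 = ‖ω‖ ^ 2 - 2 * (η * ⟪ω, v⟫) + η ^ 2 * ‖v‖ ^ 2 := by
    rw [@norm_sub_sq_real, real_inner_smul_right, norm_smul]
    simp [abs_of_pos hη, mul_pow]
  have h2 : ⟪ω, v⟫ = (∏ d', γ d') * ⟪ω, g⟫ + c * ‖ω‖ ^ 2 := by
    rw [hv, inner_add_right, real_inner_smul_right, real_inner_smul_right,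
      real_inner_self_eq_norm_sq]
  rw [h1, h2, ← hPQ]
  ring
end

section
/- Let D ≥ 3, λ ≥ 0, η > 0, p ≥ 1, and let ω ∈ ℝ^p, γ_1, …, γ_{D−1} ∈ ℝ, g ∈ ℝ^p. Define one gradient descent step by ω⁺ = ω − η·((∏_{d=1}^{D−1} γ_d)·g + (2λ/D)·ω) and, for each d, γ_d⁺ = γ_d − η·((∏_{d'≠d} γ_{d'})·⟨ω, g⟩ + (2λ/D)·γ_d). Then for any two distinct indices d, d' ∈ {1,…,D−1}, the scalar–scalar imbalance satisfies the exact identity (γ_d⁺)² − (γ_{d'}⁺)² = (γ_d² − γ_{d'}²)·( (1 − 4λη/D) + η²·( 4λ²/D² − ⟨ω, g⟩²·(∏_{d'' ∉ {d,d'}} γ_{d''})² ) ), where the product runs over d'' ∈ {1,…,D−1} with d'' ≠ d and d'' ≠ d'. -/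
open RealInnerProductSpace

/-- exact one-step evolution of the scalar–scalar imbalance under gradient
descent on the `L₂`-regularized `D`-gated objective, in factored form. -/
theorem stmt_14 (D p : ℕ) (hD : 3 ≤ D) (hp : 1 ≤ p) (lam η : ℝ)
    (hlam : 0 ≤ lam) (hη : 0 < η)
    (ω g : EuclideanSpace ℝ (Fin p)) (γ : Fin (D - 1) → ℝ) :
    ∀ d d' : Fin (D - 1), d ≠ d' →
      (γ d - η * ((∏ e ∈ Finset.univ.erase d, γ e) * ⟪ω, g⟫ +
          (2 * lam / (D : ℝ)) * γ d)) ^ 2 -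
        (γ d' - η * ((∏ e ∈ Finset.univ.erase d', γ e) * ⟪ω, g⟫ +
          (2 * lam / (D : ℝ)) * γ d')) ^ 2 =
      (γ d ^ 2 - γ d' ^ 2) *
        ((1 - 4 * lam * η / (D : ℝ)) +
          η ^ 2 * (4 * lam ^ 2 / (D : ℝ) ^ 2 -
            ⟪ω, g⟫ ^ 2 * (∏ e ∈ Finset.univ \ {d, d'}, γ e) ^ 2)) := by
  intro d d' hne
  have hset : ∀ a b : Fin (D - 1),
      (Finset.univ.erase a).erase b = Finset.univ \ {a, b} := by
    intro a b
    ext x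
    simp [Finset.mem_erase, Finset.mem_sdiff, and_comm]
  have h1 : ∏ e ∈ Finset.univ.erase d, γ e =
      γ d' * ∏ e ∈ Finset.univ \ {d, d'}, γ e := by
    rw [← hset d d']
    exact (Finset.mul_prod_erase _ γ (by simp [Finset.mem_erase, hne.symm])).symm
  have h2 : ∏ e ∈ Finset.univ.erase d', γ e =
      γ d * ∏ e ∈ Finset.univ \ {d, d'}, γ e := by
    have : Finset.univ \ ({d, d'} : Finset (Fin (D-1))) = Finset.univ \ {d', d} := by
      rw [Finset.pair_comm]
    rw [this, ← hset d' d]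
    exact (Finset.mul_prod_erase _ γ (by simp [Finset.mem_erase, hne])).symm
  rw [h1, h2]
  ring
end

section
/- Let D ≥ 3, λ ≥ 0, η > 0, p ≥ 1, and let ω ∈ ℝ^p, γ_1, …, γ_{D−1} ∈ ℝ, g ∈ ℝ^p. Define one gradient descent step by ω⁺ = ω − η·((∏_{d=1}^{D−1} γ_d)·g + (2λ/D)·ω) and, for each d, γ_d⁺ = γ_d − η·((∏_{d'≠d} γ_{d'})·⟨ω, g⟩ + (2λ/D)·γ_d). If two distinct scalar factors d, d' ∈ {1,…,D−1} are balanced before the step, i.e., γ_d² = γ_{d'}², then they remain balanced after the step: (γ_d⁺)² = (γ_{d'}⁺)². Consequently, once γ_d² = γ_{d'}² holds at some iteration, it holds at all subsequent iterations of gradient descent with any (possibly time-varying) gradients g and step sizes η. -/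
open RealInnerProductSpace

lemma step_balanced {m : ℕ} (γ : Fin m → ℝ) (d d' : Fin m) (hdd : d ≠ d')
    (hb : γ d ^ 2 = γ d' ^ 2) (η c a : ℝ) :
    (γ d - η * ((∏ e ∈ Finset.univ.erase d, γ e) * c + a * γ d)) ^ 2 =
      (γ d' - η * ((∏ e ∈ Finset.univ.erase d', γ e) * c + a * γ d')) ^ 2 := by
  set Pd := ∏ e ∈ Finset.univ.erase d, γ e with hPd
  set Pd' := ∏ e ∈ Finset.univ.erase d', γ e with hPd'
  have h2 : Pd * γ d = Pd' * γ d' := by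
    rw [hPd, hPd', Finset.prod_erase_mul _ _ (Finset.mem_univ d),
      Finset.prod_erase_mul _ _ (Finset.mem_univ d')]
  have h3 : Pd ^ 2 = Pd' ^ 2 := by
    by_cases h0 : γ d = 0
    · have h0' : γ d' = 0 := by
        have h := hb.symm; rw [h0] at h; exact pow_eq_zero_iff (n := 2) (by norm_num) |>.mp (by simpa using h)
      have : Pd = 0 := Finset.prod_eq_zero (Finset.mem_erase.mpr ⟨Ne.symm hdd, Finset.mem_univ d'⟩) h0'
      have : Pd' = 0 := Finset.prod_eq_zero (Finset.mem_erase.mpr ⟨hdd, Finset.mem_univ d⟩) h0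
      simp_all
    · have hne : γ d ^ 2 ≠ 0 := pow_ne_zero _ h0
      have : Pd ^ 2 * γ d ^ 2 = Pd' ^ 2 * γ d' ^ 2 := by
        rw [← mul_pow, ← mul_pow, h2]
      rw [← hb] at this
      exact mul_right_cancel₀ hne this
  linear_combination (1 - 2*η*a + η^2*a^2) * hb + (-2*η*c + 2*η^2*a*c) * h2 + η^2*c^2 * h3

/-- balancedness between two scalar gating factors is preserved by one
(S)GD step on the `L₂`-regularized `D`-gated objective, and consequently, once two scalar
factors are balanced at some iteration, they remain balanced at all subsequent iterations,
for any (possibly time-varying) gradients and step sizes. -/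
theorem stmt_15 (D p : ℕ) (hD : 3 ≤ D) (hp : 1 ≤ p) (lam : ℝ) (hlam : 0 ≤ lam) :
    -- one-step preservation of balancedness
    (∀ (η : ℝ), 0 < η → ∀ (ω g : EuclideanSpace ℝ (Fin p)) (γ : Fin (D - 1) → ℝ)
      (d d' : Fin (D - 1)), d ≠ d' → γ d ^ 2 = γ d' ^ 2 →
        (γ d - η * ((∏ e ∈ Finset.univ.erase d, γ e) * ⟪ω, g⟫ +
            (2 * lam / (D : ℝ)) * γ d)) ^ 2 =
          (γ d' - η * ((∏ e ∈ Finset.univ.erase d', γ e) * ⟪ω, g⟫ +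
            (2 * lam / (D : ℝ)) * γ d')) ^ 2) ∧
    -- consequently: once balanced, always balanced along (S)GD iterates
    (∀ (ω : ℕ → EuclideanSpace ℝ (Fin p)) (γ : Fin (D - 1) → ℕ → ℝ)
      (g : ℕ → EuclideanSpace ℝ (Fin p)) (η : ℕ → ℝ),
      (∀ n, 0 < η n) →
      (∀ n, ω (n + 1) =
        ω n - η n • ((∏ e, γ e n) • g n + (2 * lam / (D : ℝ)) • ω n)) →
      (∀ (e : Fin (D - 1)) (n : ℕ), γ e (n + 1) =
        γ e n - η n * ((∏ e' ∈ Finset.univ.erase e, γ e' n) * ⟪ω n, g n⟫ +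
          (2 * lam / (D : ℝ)) * γ e n)) →
      ∀ (d d' : Fin (D - 1)), d ≠ d' → ∀ N : ℕ, γ d N ^ 2 = γ d' N ^ 2 →
        ∀ n : ℕ, N ≤ n → γ d n ^ 2 = γ d' n ^ 2) := by
  constructor
  · intro η _ ω g γ d d' hdd hb
    exact step_balanced γ d d' hdd hb η _ _
  · intro ω γ g η _ _ hγ d d' hdd N hbN n hNn
    induction n with
    | zero => simpa [Nat.le_zero.mp hNn] using hbN
    | succ k ih =>
      rcases Nat.lt_or_ge N (k + 1) with h | h
      · have hk : γ d k ^ 2 = γ d' k ^ 2 := ih (Nat.lt_succ_iff.mp h)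
        rw [hγ d k, hγ d' k]
        exact step_balanced (fun e => γ e k) d d' hdd hk _ _ _
      · simpa [Nat.le_antisymm hNn h] using hbN
end
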